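/- arXiv:1804.07107 — 3 statements merged into one kernel-verified Lean document; each statement's English description precedes it below -/
import Mathlib

section
/- For every symmetric network congestion game on a series-parallel graph, all 1-lookahead outcomes have the same value of the Rosenthal potential: if A and B are 1-lookahead outcomes, then Φ(A) = Φ(B). -/
/-- A congestion game with `n` players on a finite resource type `R`:
each player has a finite set of actions (each action a set of resources),
and each resource has a delay function `ℕ → ℝ`. -/
structure CGame (R : Type) [DecidableEq R] [Fintype R] (n : ℕ) where
  actions : Fin n → Finset (Finset R)
  delay : R → ℕ → ℝ

namespace CGame

variable {R : Type} [DecidableEq R] [Fintype R] {n : ℕ}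

/-- The congestion `x(A)_r`: number of players using resource `r` in profile `A`. -/
def congestion (_G : CGame R n) (A : Fin n → Finset R) (r : R) : ℕ :=
  (Finset.univ.filter fun i => r ∈ A i).card

/-- The cost of player `i` in profile `A`. -/
def cost (G : CGame R n) (A : Fin n → Finset R) (i : Fin n) : ℝ :=
  ∑ r ∈ A i, G.delay r (G.congestion A r)

/-- `A` is an outcome: each player plays one of his actions. -/
def IsOutcome (G : CGame R n) (A : Fin n → Finset R) : Prop :=
  ∀ i, A i ∈ G.actions i

/-- `A` is a (pure) Nash equilibrium. -/
def IsNash (G : CGame R n) (A : Fin n → Finset R) : Prop :=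
  G.IsOutcome A ∧ ∀ i, ∀ B ∈ G.actions i, G.cost A i ≤ G.cost (Function.update A i B) i

/-- The subgame induced by the first player playing `a`. -/
def subgame (G : CGame R (n + 1)) (a : Finset R) : CGame R n where
  actions := fun i => G.actions i.succ
  delay := fun r y => G.delay r (y + if r ∈ a then 1 else 0)

/-- The subgame induced by the first `m` players playing `P`. -/
def subgameMany {m k : ℕ} (G : CGame R (m + k)) (P : Fin m → Finset R) : CGame R k where
  actions := fun i => G.actions (Fin.natAdd m i)
  delay := fun r y => G.delay r (y + (Finset.univ.filter fun i : Fin m => r ∈ P i).card)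

/-- `G^k`: the game on the first `min k n` players. -/
def truncate (G : CGame R n) (k : ℕ) : CGame R (min k n) where
  actions := fun i => G.actions (Fin.castLE (min_le_right k n) i)
  delay := G.delay

/-- The game reordered so that the player in position `i` is player `σ i`. -/
def reorder (G : CGame R n) (σ : Equiv.Perm (Fin n)) : CGame R n where
  actions := fun i => G.actions (σ i)
  delay := G.delay

/-- Subgame-perfect outcomes with respect to the order `1, …, n`. -/
def IsSPO : {n : ℕ} → CGame R n → (Fin n → Finset R) → Prop
  | 0, _, _ => True
  | _ + 1, G, A =>
      A 0 ∈ G.actions 0 ∧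
      ∃ f : Finset R → (Fin _ → Finset R),
        (∀ a ∈ G.actions 0, IsSPO (G.subgame a) (f a)) ∧
        f (A 0) = Fin.tail A ∧
        ∀ a ∈ G.actions 0,
          G.cost (Fin.cons (A 0) (f (A 0))) 0 ≤ G.cost (Fin.cons a (f a)) 0

/-- `k`-lookahead outcomes with respect to the order `1, …, n`. -/
def IsKLA (k : ℕ) : {n : ℕ} → CGame R n → (Fin n → Finset R) → Prop
  | 0, _, _ => True
  | n + 1, G, A =>
      (∃ (hk : 0 < min k (n + 1)) (B : Fin (min k (n + 1)) → Finset R),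
          IsSPO (G.truncate k) B ∧ B ⟨0, hk⟩ = A 0) ∧
      IsKLA k (G.subgame (A 0)) (Fin.tail A)

/-- `A` is a subgame-perfect outcome of `G` with respect to some order of the players. -/
def IsSPOutcome (G : CGame R n) (A : Fin n → Finset R) : Prop :=
  ∃ σ : Equiv.Perm (Fin n), IsSPO (G.reorder σ) (A ∘ σ)

/-- `A` is a `k`-lookahead outcome of `G` with respect to some order of the players. -/
def IsKLO (k : ℕ) (G : CGame R n) (A : Fin n → Finset R) : Prop :=
  ∃ σ : Equiv.Perm (Fin n), IsKLA k (G.reorder σ) (A ∘ σ)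

/-- The cost of player `i` when only the players in `s` play (profile restricted to `s`). -/
def costOn (G : CGame R n) (s : Finset (Fin n)) (A : Fin n → Finset R) (i : Fin n) : ℝ :=
  ∑ r ∈ A i, G.delay r ((s.filter fun j => r ∈ A j).card)

/-- `G` is generic: in every restriction of the game to a subset of the players,
a player's cost changes whenever his own action changes. -/
def Generic (G : CGame R n) : Prop :=
  ∀ s : Finset (Fin n), ∀ A B : Fin n → Finset R,
    (∀ i ∈ s, A i ∈ G.actions i) → (∀ i ∈ s, B i ∈ G.actions i) →
    ∀ j ∈ s, A j ≠ B j → G.costOn s A j ≠ G.costOn s B j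

/-- Utilitarian social cost. -/
def SC (G : CGame R n) (A : Fin n → Finset R) : ℝ :=
  ∑ i, G.cost A i

/-- Minimum social cost over all outcomes. -/
noncomputable def optSC (G : CGame R n) : ℝ :=
  sInf {y | ∃ A, G.IsOutcome A ∧ y = G.SC A}

/-- The `k`-Lookahead Price of Anarchy. -/
noncomputable def kLPoA (G : CGame R n) (k : ℕ) : ℝ :=
  sSup {y | ∃ A, IsKLO k G A ∧ y = G.SC A / G.optSC}

/-- The Price of Anarchy. -/
noncomputable def PoA (G : CGame R n) : ℝ :=
  sSup {y | ∃ A, G.IsNash A ∧ y = G.SC A / G.optSC}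

/-- Opportunity cost `O_A` of an outcome `A` in a symmetric game with action set `𝒜`. -/
noncomputable def oppCost (G : CGame R n) (𝒜 : Finset (Finset R)) (A : Fin n → Finset R) : ℝ :=
  sInf {y | ∃ P ∈ 𝒜, y = ∑ r ∈ P, G.delay r (G.congestion A r + 1)}

/-- Worst cost (egalitarian social cost) `W_A` of an outcome `A`. -/
noncomputable def worstCost (G : CGame R n) (A : Fin n → Finset R) : ℝ :=
  sSup {y | ∃ i, y = G.cost A i}

/-- Rosenthal's potential function. -/
def potential (G : CGame R n) (A : Fin n → Finset R) : ℝ :=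
  ∑ r : R, ∑ i ∈ Finset.Icc 1 (G.congestion A r), G.delay r i

end CGame
/-- Syntax trees of extension-parallel graphs: a single arc; parallel composition;
series composition of a single arc with an EP graph (arc first or arc last). -/
inductive EPTree : Type
  | edge : EPTree
  | parallel : EPTree → EPTree → EPTree
  | extHead : EPTree → EPTree
  | extTail : EPTree → EPTree

namespace EPTree

/-- The arcs of an extension-parallel graph. -/
def Arc : EPTree → Type
  | edge => Unit
  | parallel t₁ t₂ => t₁.Arc ⊕ t₂.Arc
  | extHead t => Unit ⊕ t.Arc
  | extTail t => t.Arc ⊕ Unit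

def arcDecEq : (t : EPTree) → DecidableEq t.Arc
  | edge => inferInstanceAs (DecidableEq Unit)
  | parallel t₁ t₂ =>
      letI := t₁.arcDecEq; letI := t₂.arcDecEq
      inferInstanceAs (DecidableEq (t₁.Arc ⊕ t₂.Arc))
  | extHead t =>
      letI := t.arcDecEq
      inferInstanceAs (DecidableEq (Unit ⊕ t.Arc))
  | extTail t =>
      letI := t.arcDecEq
      inferInstanceAs (DecidableEq (t.Arc ⊕ Unit))

instance (t : EPTree) : DecidableEq t.Arc := t.arcDecEq

def arcFintype : (t : EPTree) → Fintype t.Arc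
  | edge => inferInstanceAs (Fintype Unit)
  | parallel t₁ t₂ =>
      letI := t₁.arcFintype; letI := t₂.arcFintype
      inferInstanceAs (Fintype (t₁.Arc ⊕ t₂.Arc))
  | extHead t =>
      letI := t.arcFintype
      inferInstanceAs (Fintype (Unit ⊕ t.Arc))
  | extTail t =>
      letI := t.arcFintype
      inferInstanceAs (Fintype (t.Arc ⊕ Unit))

instance (t : EPTree) : Fintype t.Arc := t.arcFintype

/-- The set of arc sets of directed `o`–`d` paths of an extension-parallel graph. -/
def paths : (t : EPTree) → Finset (Finset t.Arc)
  | edge => {(Finset.univ : Finset Unit)}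
  | parallel t₁ t₂ =>
      (t₁.paths.image fun P => P.image Sum.inl) ∪ (t₂.paths.image fun P => P.image Sum.inr)
  | extHead t => t.paths.image fun P => insert (Sum.inl ()) (P.image Sum.inr)
  | extTail t => t.paths.image fun P => insert (Sum.inr ()) (P.image Sum.inl)

end EPTree

/-- Syntax trees of series-parallel graphs: a single arc; series composition;
parallel composition. -/
inductive SPTree : Type
  | edge : SPTree
  | series : SPTree → SPTree → SPTree
  | parallel : SPTree → SPTree → SPTree

namespace SPTree

/-- The arcs of a series-parallel graph. -/
def Arc : SPTree → Type
  | edge => Unit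
  | series t₁ t₂ => t₁.Arc ⊕ t₂.Arc
  | parallel t₁ t₂ => t₁.Arc ⊕ t₂.Arc

def arcDecEq : (t : SPTree) → DecidableEq t.Arc
  | edge => inferInstanceAs (DecidableEq Unit)
  | series t₁ t₂ =>
      letI := t₁.arcDecEq; letI := t₂.arcDecEq
      inferInstanceAs (DecidableEq (t₁.Arc ⊕ t₂.Arc))
  | parallel t₁ t₂ =>
      letI := t₁.arcDecEq; letI := t₂.arcDecEq
      inferInstanceAs (DecidableEq (t₁.Arc ⊕ t₂.Arc))

instance (t : SPTree) : DecidableEq t.Arc := t.arcDecEq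

def arcFintype : (t : SPTree) → Fintype t.Arc
  | edge => inferInstanceAs (Fintype Unit)
  | series t₁ t₂ =>
      letI := t₁.arcFintype; letI := t₂.arcFintype
      inferInstanceAs (Fintype (t₁.Arc ⊕ t₂.Arc))
  | parallel t₁ t₂ =>
      letI := t₁.arcFintype; letI := t₂.arcFintype
      inferInstanceAs (Fintype (t₁.Arc ⊕ t₂.Arc))

instance (t : SPTree) : Fintype t.Arc := t.arcFintype

/-- The set of arc sets of directed `o`–`d` paths of a series-parallel graph. -/
def paths : (t : SPTree) → Finset (Finset t.Arc)
  | edge => {(Finset.univ : Finset Unit)}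
  | series t₁ t₂ =>
      (t₁.paths ×ˢ t₂.paths).image fun p => p.1.image Sum.inl ∪ p.2.image Sum.inr
  | parallel t₁ t₂ =>
      (t₁.paths.image fun P => P.image Sum.inl) ∪ (t₂.paths.image fun P => P.image Sum.inr)

/-- A series-parallel graph is extension-parallel if in every series composition one of
the two parts is a single arc. -/
def IsEP : SPTree → Prop
  | edge => True
  | series t₁ t₂ => (t₁ = edge ∧ t₂.IsEP) ∨ (t₂ = edge ∧ t₁.IsEP)
  | parallel t₁ t₂ => t₁.IsEP ∧ t₂.IsEP

end SPTree

/-- The symmetric network congestion game with `n` players on an extension-parallel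
graph `t` with delay functions `d`. -/
def SNCGep (t : EPTree) (d : t.Arc → ℕ → ℝ) (n : ℕ) : CGame t.Arc n where
  actions := fun _ => t.paths
  delay := d

/-- The symmetric network congestion game with `n` players on a series-parallel
graph `t` with delay functions `d`. -/
def SNCGsp (t : SPTree) (d : t.Arc → ℕ → ℝ) (n : ℕ) : CGame t.Arc n where
  actions := fun _ => t.paths
  delay := d

namespace SPProof

open Finset
open scoped Classical

variable {R : Type}

/-- The load (congestion) induced by a list of resource sets. -/
noncomputable def load (L : List (Finset R)) (r : R) : ℕ :=
  L.countP fun Q => @decide (r ∈ Q) (Classical.propDecidable _)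

@[simp] lemma load_nil (r : R) : load ([] : List (Finset R)) r = 0 := rfl

@[simp] lemma load_cons (P : Finset R) (L : List (Finset R)) (r : R) :
    load (P :: L) r = load L r + (if r ∈ P then 1 else 0) := by
  classical
  rw [load, List.countP_cons, load]
  by_cases h : r ∈ P <;> simp [h]

@[simp] lemma load_append (L₁ L₂ : List (Finset R)) (r : R) :
    load (L₁ ++ L₂) r = load L₁ r + load L₂ r := by
  simp [load, List.countP_append]

lemma load_le_length (L : List (Finset R)) (r : R) : load L r ≤ L.length :=
  List.countP_le_length

section maps

variable {α β : Type} [DecidableEq α] [DecidableEq β]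

lemma load_map_inl_inl (L : List (Finset α)) (a : α) :
    load (L.map fun P => P.image (Sum.inl : α → α ⊕ β)) (Sum.inl a) = load L a := by
  induction L with
  | nil => rfl
  | cons P L ih => simp [ih]

lemma load_map_inl_inr (L : List (Finset α)) (b : β) :
    load (L.map fun P => P.image (Sum.inl : α → α ⊕ β)) (Sum.inr b) = 0 := by
  induction L with
  | nil => rfl
  | cons P L ih => simp [ih]

lemma load_map_inr_inr (L : List (Finset β)) (b : β) :
    load (L.map fun P => P.image (Sum.inr : β → α ⊕ β)) (Sum.inr b) = load L b := by
  induction L with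
  | nil => rfl
  | cons P L ih => simp [ih]

lemma load_map_inr_inl (L : List (Finset β)) (a : α) :
    load (L.map fun P => P.image (Sum.inr : β → α ⊕ β)) (Sum.inl a) = 0 := by
  induction L with
  | nil => rfl
  | cons P L ih => simp [ih]

/-- Partition a list of paths of a parallel composition into the two sides. -/
lemma exists_partition (S₁ : Finset (Finset α)) (S₂ : Finset (Finset β)) :
    ∀ L : List (Finset (α ⊕ β)),
      (∀ Q ∈ L, Q ∈ (S₁.image fun P => P.image Sum.inl) ∪ (S₂.image fun P => P.image Sum.inr)) →
      ∃ L₁ L₂, (∀ P ∈ L₁, P ∈ S₁) ∧ (∀ P ∈ L₂, P ∈ S₂) ∧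
        L₁.length + L₂.length = L.length ∧
        (∀ a, load L (Sum.inl a) = load L₁ a) ∧
        (∀ b, load L (Sum.inr b) = load L₂ b) := by
  intro L
  induction L with
  | nil => exact fun _ => ⟨[], [], by simp, by simp, by simp, by simp, by simp⟩
  | cons Q L ih =>
    intro h
    obtain ⟨L₁, L₂, h₁, h₂, hlen, ha, hb⟩ := ih fun Q' hQ' => h Q' (List.mem_cons_of_mem _ hQ')
    rcases Finset.mem_union.1 (h Q (List.mem_cons_self)) with hQ | hQ
    · obtain ⟨P, hP, rfl⟩ := Finset.mem_image.1 hQ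
      refine ⟨P :: L₁, L₂, ?_, h₂, by simp; omega, ?_, ?_⟩
      · intro P' hP'
        rcases List.mem_cons.1 hP' with rfl | hP'
        · exact hP
        · exact h₁ P' hP'
      · intro a; simp [ha a]
      · intro b; simp [hb b]
    · obtain ⟨P, hP, rfl⟩ := Finset.mem_image.1 hQ
      refine ⟨L₁, P :: L₂, h₁, ?_, by simp; omega, ?_, ?_⟩
      · intro P' hP'
        rcases List.mem_cons.1 hP' with rfl | hP'
        · exact hP
        · exact h₂ P' hP'
      · intro a; simp [ha a]
      · intro b; simp [hb b]

/-- Split a list of paths of a series composition into the two components. -/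
lemma exists_series_split (S₁ : Finset (Finset α)) (S₂ : Finset (Finset β)) :
    ∀ L : List (Finset (α ⊕ β)),
      (∀ Q ∈ L, Q ∈ (S₁ ×ˢ S₂).image fun p => p.1.image Sum.inl ∪ p.2.image Sum.inr) →
      ∃ L₁ L₂, (∀ P ∈ L₁, P ∈ S₁) ∧ (∀ P ∈ L₂, P ∈ S₂) ∧
        L₁.length = L.length ∧ L₂.length = L.length ∧
        (∀ a, load L (Sum.inl a) = load L₁ a) ∧
        (∀ b, load L (Sum.inr b) = load L₂ b) := by
  intro L
  induction L with
  | nil => exact fun _ => ⟨[], [], by simp, by simp, by simp, by simp, by simp, by simp⟩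
  | cons Q L ih =>
    intro h
    obtain ⟨L₁, L₂, h₁, h₂, hl₁, hl₂, ha, hb⟩ := ih fun Q' hQ' => h Q' (List.mem_cons_of_mem _ hQ')
    obtain ⟨p, hp, rfl⟩ := Finset.mem_image.1 (h Q (List.mem_cons_self))
    obtain ⟨hp₁, hp₂⟩ := Finset.mem_product.1 hp
    refine ⟨p.1 :: L₁, p.2 :: L₂, ?_, ?_, by simp [hl₁], by simp [hl₂], ?_, ?_⟩
    · intro P' hP'
      rcases List.mem_cons.1 hP' with rfl | hP'
      · exact hp₁
      · exact h₁ P' hP'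
    · intro P' hP'
      rcases List.mem_cons.1 hP' with rfl | hP'
      · exact hp₂
      · exact h₂ P' hP'
    · intro a; simp [ha a]
    · intro b; simp [hb b]

/-- Join two equal-length lists of component paths into a list of series paths. -/
lemma exists_series_join (S₁ : Finset (Finset α)) (S₂ : Finset (Finset β)) :
    ∀ (L₁ : List (Finset α)) (L₂ : List (Finset β)), L₁.length = L₂.length →
      (∀ P ∈ L₁, P ∈ S₁) → (∀ P ∈ L₂, P ∈ S₂) →
      ∃ L : List (Finset (α ⊕ β)),
        (∀ Q ∈ L, Q ∈ (S₁ ×ˢ S₂).image fun p => p.1.image Sum.inl ∪ p.2.image Sum.inr) ∧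
        L.length = L₁.length ∧
        (∀ a, load L (Sum.inl a) = load L₁ a) ∧
        (∀ b, load L (Sum.inr b) = load L₂ b) := by
  intro L₁
  induction L₁ with
  | nil =>
    intro L₂ hlen _ _
    have : L₂ = [] := List.length_eq_zero_iff.1 hlen.symm
    subst this
    exact ⟨[], by simp, by simp, by simp, by simp⟩
  | cons P L₁ ih =>
    intro L₂ hlen h₁ h₂
    cases L₂ with
    | nil => simp at hlen
    | cons P₂ L₂ =>
      obtain ⟨L, hL, hlen', ha, hb⟩ := ih L₂ (by simpa using hlen)
        (fun P' hP' => h₁ P' (List.mem_cons_of_mem _ hP'))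
        (fun P' hP' => h₂ P' (List.mem_cons_of_mem _ hP'))
      refine ⟨(P.image Sum.inl ∪ P₂.image Sum.inr) :: L, ?_, by simp [hlen'], ?_, ?_⟩
      · intro Q' hQ'
        rcases List.mem_cons.1 hQ' with rfl | hQ'
        · exact Finset.mem_image.2 ⟨(P, P₂), Finset.mem_product.2
            ⟨h₁ P (List.mem_cons_self), h₂ P₂ (List.mem_cons_self)⟩, rfl⟩
        · exact hL Q' hQ'
      · intro a; simp [ha a]
      · intro b; simp [hb b]

end maps

/-- Key exchange lemma for series-parallel graphs. -/
lemma exchange (t : SPTree) :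
    ∀ (Lx Ly : List (Finset t.Arc)),
      (∀ P ∈ Lx, P ∈ t.paths) → (∀ P ∈ Ly, P ∈ t.paths) → Lx.length < Ly.length →
      ∃ P ∈ t.paths, ∃ Ly' : List (Finset t.Arc),
        (∀ Q ∈ Ly', Q ∈ t.paths) ∧ Ly'.length + 1 = Ly.length ∧
        (∀ r, load Ly r = load Ly' r + (if r ∈ P then 1 else 0)) ∧
        (∀ r ∈ P, load Lx r < load Ly r) := by
  induction t with
  | edge =>
    intro Lx Ly hLx hLy hlen
    have hall : ∀ (L : List (Finset SPTree.edge.Arc)),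
        (∀ P ∈ L, P ∈ SPTree.edge.paths) → ∀ r, load L r = L.length := by
      intro L hL r
      refine List.countP_eq_length.2 fun Q hQ => ?_
      have : Q = Finset.univ := Finset.mem_singleton.1 (hL Q hQ)
      simp [this]
    cases Ly with
    | nil => simp at hlen
    | cons Q Ly' =>
      have hLy' : ∀ P ∈ Ly', P ∈ SPTree.edge.paths :=
        fun Q' hQ' => hLy Q' (List.mem_cons_of_mem _ hQ')
      refine ⟨Finset.univ, by exact Finset.mem_singleton_self _, Ly', hLy', by simp, ?_, ?_⟩
      · intro r
        rw [hall _ hLy r, hall _ hLy' r]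
        simp
      · intro r _
        rw [hall _ hLy r]
        calc load Lx r ≤ Lx.length := load_le_length _ _
          _ < (Q :: Ly').length := hlen
  | series t₁ t₂ ih₁ ih₂ =>
    dsimp only [SPTree.Arc]
    intro Lx Ly hLx hLy hlen
    obtain ⟨Lx₁, Lx₂, hx₁, hx₂, hxl₁, hxl₂, hxa, hxb⟩ :=
      exists_series_split t₁.paths t₂.paths Lx hLx
    obtain ⟨Ly₁, Ly₂, hy₁, hy₂, hyl₁, hyl₂, hya, hyb⟩ :=
      exists_series_split t₁.paths t₂.paths Ly hLy
    obtain ⟨P₁, hP₁, Ly₁', h₁', hlen₁, hload₁, hlt₁⟩ := ih₁ Lx₁ Ly₁ hx₁ hy₁ (by omega)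
    obtain ⟨P₂, hP₂, Ly₂', h₂', hlen₂, hload₂, hlt₂⟩ := ih₂ Lx₂ Ly₂ hx₂ hy₂ (by omega)
    obtain ⟨L', hL', hlen', ha', hb'⟩ :=
      exists_series_join t₁.paths t₂.paths Ly₁' Ly₂' (by omega) h₁' h₂'
    refine ⟨P₁.image Sum.inl ∪ P₂.image Sum.inr,
      Finset.mem_image.2 ⟨(P₁, P₂), Finset.mem_product.2 ⟨hP₁, hP₂⟩, rfl⟩,
      L', hL', by omega, ?_, ?_⟩
    · intro r
      rcases r with a | b
      · rw [hya a, hload₁ a, ha' a]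
        congr 1
        by_cases h : a ∈ P₁
        · rw [if_pos h, if_pos]
          exact Finset.mem_union_left _ (Finset.mem_image_of_mem _ h)
        · rw [if_neg h, if_neg]
          intro hc
          rcases Finset.mem_union.1 hc with hc | hc
          · obtain ⟨x, hx, hxe⟩ := Finset.mem_image.1 hc
            exact h ((Sum.inl.inj hxe) ▸ hx)
          · obtain ⟨x, hx, hxe⟩ := Finset.mem_image.1 hc
            exact Sum.inr_ne_inl hxe
      · rw [hyb b, hload₂ b, hb' b]
        congr 1
        by_cases h : b ∈ P₂
        · rw [if_pos h, if_pos]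
          exact Finset.mem_union_right _ (Finset.mem_image_of_mem _ h)
        · rw [if_neg h, if_neg]
          intro hc
          rcases Finset.mem_union.1 hc with hc | hc
          · obtain ⟨x, hx, hxe⟩ := Finset.mem_image.1 hc
            exact Sum.inl_ne_inr hxe
          · obtain ⟨x, hx, hxe⟩ := Finset.mem_image.1 hc
            exact h ((Sum.inr.inj hxe) ▸ hx)
    · intro r hr
      rcases Finset.mem_union.1 hr with hr | hr
      · obtain ⟨a, ha2, rfl⟩ := Finset.mem_image.1 hr
        rw [hxa a, hya a]
        exact hlt₁ a ha2
      · obtain ⟨b, hb2, rfl⟩ := Finset.mem_image.1 hr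
        rw [hxb b, hyb b]
        exact hlt₂ b hb2
  | parallel t₁ t₂ ih₁ ih₂ =>
    dsimp only [SPTree.Arc]
    intro Lx Ly hLx hLy hlen
    obtain ⟨Lx₁, Lx₂, hx₁, hx₂, hxlen, hxa, hxb⟩ :=
      exists_partition t₁.paths t₂.paths Lx hLx
    obtain ⟨Ly₁, Ly₂, hy₁, hy₂, hylen, hya, hyb⟩ :=
      exists_partition t₁.paths t₂.paths Ly hLy
    rcases (by omega : Lx₁.length < Ly₁.length ∨ Lx₂.length < Ly₂.length) with hc | hc
    · obtain ⟨P, hP, Ly₁', hLy₁', hlen', hload, hlt⟩ := ih₁ Lx₁ Ly₁ hx₁ hy₁ hc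
      refine ⟨P.image Sum.inl, Finset.mem_union_left _ (Finset.mem_image_of_mem _ hP),
        (Ly₁'.map fun P => P.image Sum.inl) ++ (Ly₂.map fun P => P.image Sum.inr),
        ?_, by simp; omega, ?_, ?_⟩
      · intro Q hQ
        rcases List.mem_append.1 hQ with hQ | hQ
        · obtain ⟨P', hP', rfl⟩ := List.mem_map.1 hQ
          exact Finset.mem_union_left _ (Finset.mem_image_of_mem _ (hLy₁' P' hP'))
        · obtain ⟨P', hP', rfl⟩ := List.mem_map.1 hQ
          exact Finset.mem_union_right _ (Finset.mem_image_of_mem _ (hy₂ P' hP'))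
      · intro r
        rcases r with a | b
        · rw [hya a, hload a, load_append, load_map_inl_inl, load_map_inr_inl]
          by_cases h : a ∈ P
          · rw [if_pos h]
            split
            · omega
            next hn => exact absurd (Finset.mem_image_of_mem _ h) hn
          · rw [if_neg h, if_neg (fun hc => h (by
              obtain ⟨x, hx, hxe⟩ := Finset.mem_image.1 hc
              exact (Sum.inl.inj hxe) ▸ hx))]
        · rw [hyb b, load_append, load_map_inl_inr, load_map_inr_inr]
          simp
          intro hc
          obtain ⟨x, _, hxe⟩ := Finset.mem_image.1 hc
          exact Sum.inl_ne_inr hxe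
      · intro r hr
        obtain ⟨a, ha2, rfl⟩ := Finset.mem_image.1 hr
        rw [hxa a, hya a]
        exact hlt a ha2
    · obtain ⟨P, hP, Ly₂', hLy₂', hlen', hload, hlt⟩ := ih₂ Lx₂ Ly₂ hx₂ hy₂ hc
      refine ⟨P.image Sum.inr, Finset.mem_union_right _ (Finset.mem_image_of_mem _ hP),
        (Ly₁.map fun P => P.image Sum.inl) ++ (Ly₂'.map fun P => P.image Sum.inr),
        ?_, by simp; omega, ?_, ?_⟩
      · intro Q hQ
        rcases List.mem_append.1 hQ with hQ | hQ
        · obtain ⟨P', hP', rfl⟩ := List.mem_map.1 hQ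
          exact Finset.mem_union_left _ (Finset.mem_image_of_mem _ (hy₁ P' hP'))
        · obtain ⟨P', hP', rfl⟩ := List.mem_map.1 hQ
          exact Finset.mem_union_right _ (Finset.mem_image_of_mem _ (hLy₂' P' hP'))
      · intro r
        rcases r with a | b
        · rw [hya a, load_append, load_map_inl_inl, load_map_inr_inl]
          simp
          intro hc
          obtain ⟨x, _, hxe⟩ := Finset.mem_image.1 hc
          exact Sum.inr_ne_inl hxe
        · rw [hyb b, hload b, load_append, load_map_inl_inr, load_map_inr_inr]
          by_cases h : b ∈ P
          · rw [if_pos h]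
            split
            · omega
            next hn => exact absurd (Finset.mem_image_of_mem _ h) hn
          · rw [if_neg h, if_neg (fun hc => h (by
              obtain ⟨x, hx, hxe⟩ := Finset.mem_image.1 hc
              exact (Sum.inr.inj hxe) ▸ hx))]
            omega
      · intro r hr
        obtain ⟨b, hb2, rfl⟩ := Finset.mem_image.1 hr
        rw [hxb b, hyb b]
        exact hlt b hb2

section pot

variable [Fintype R]

/-- Rosenthal potential of a load profile. -/
noncomputable def pot (d : R → ℕ → ℝ) (x : R → ℕ) : ℝ :=
  ∑ r, ∑ i ∈ Finset.Icc 1 (x r), d r i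

lemma pot_congr {d : R → ℕ → ℝ} {x y : R → ℕ} (h : ∀ r, x r = y r) :
    pot d x = pot d y := by
  unfold pot
  exact Finset.sum_congr rfl fun r _ => by rw [h r]

lemma pot_cons (d : R → ℕ → ℝ) (P : Finset R) (L : List (Finset R)) :
    pot d (load (P :: L)) = pot d (load L) + ∑ r ∈ P, d r (load L r + 1) := by
  have key : ∀ r : R, (∑ i ∈ Finset.Icc 1 (load (P :: L) r), d r i)
      = (∑ i ∈ Finset.Icc 1 (load L r), d r i)
        + (if r ∈ P then d r (load L r + 1) else 0) := by
    intro r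
    rw [load_cons]
    by_cases h : r ∈ P
    · simp only [if_pos h]
      rw [Finset.sum_Icc_succ_top (Nat.le_add_left 1 _)]
    · simp only [if_neg h, add_zero]
  calc pot d (load (P :: L))
      = ∑ r, ((∑ i ∈ Finset.Icc 1 (load L r), d r i)
          + (if r ∈ P then d r (load L r + 1) else 0)) :=
        Finset.sum_congr rfl fun r _ => key r
    _ = pot d (load L) + ∑ r, (if r ∈ P then d r (load L r + 1) else 0) :=
        Finset.sum_add_distrib
    _ = pot d (load L) + ∑ r ∈ P, d r (load L r + 1) := by
        rw [Finset.sum_ite_mem, Finset.univ_inter]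

end pot

/-- A greedy step from an optimal load profile stays optimal. -/
lemma greedy_step (t : SPTree) (d : t.Arc → ℕ → ℝ) (hmono : ∀ r, Monotone (d r))
    (L0 : List (Finset t.Arc)) (hL0 : ∀ P ∈ L0, P ∈ t.paths)
    (hopt : ∀ L', (∀ P ∈ L', P ∈ t.paths) → L'.length = L0.length →
      pot d (load L0) ≤ pot d (load L'))
    (P : Finset t.Arc) (hP : P ∈ t.paths)
    (hmin : ∀ Q ∈ t.paths, (∑ r ∈ P, d r (load L0 r + 1)) ≤ ∑ r ∈ Q, d r (load L0 r + 1)) :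
    ∀ L', (∀ Q ∈ L', Q ∈ t.paths) → L'.length = L0.length + 1 →
      pot d (load (P :: L0)) ≤ pot d (load L') := by
  intro Ly hLy hlen
  obtain ⟨Q, hQ, Ly', hLy', hlen', hload, hlt⟩ := exchange t L0 Ly hL0 hLy (by omega)
  have e1 : pot d (load Ly) = pot d (load Ly') + ∑ r ∈ Q, d r (load Ly' r + 1) := by
    rw [← pot_cons]
    refine pot_congr fun r => ?_
    rw [hload r, load_cons]
    by_cases h : r ∈ Q <;> simp [h]
  have e2 : pot d (load L0) ≤ pot d (load Ly') := hopt Ly' hLy' (by omega)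
  have e3 : (∑ r ∈ Q, d r (load L0 r + 1)) ≤ ∑ r ∈ Q, d r (load Ly' r + 1) := by
    refine Finset.sum_le_sum fun r hr => hmono r ?_
    have h1 := hlt r hr
    have h2 := hload r
    rw [if_pos hr] at h2
    omega
  rw [pot_cons, e1]
  calc pot d (load L0) + ∑ r ∈ P, d r (load L0 r + 1)
      ≤ pot d (load L0) + ∑ r ∈ Q, d r (load L0 r + 1) := add_le_add le_rfl (hmin Q hQ)
    _ ≤ pot d (load Ly') + ∑ r ∈ Q, d r (load Ly' r + 1) := add_le_add e2 e3

/-- A subgame-perfect outcome of a one-player game is a best response. -/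
lemma spo_one {R : Type} [DecidableEq R] [Fintype R] {m : ℕ} (hm : m = 1)
    (G : CGame R m) (B : Fin m → Finset R) (h : CGame.IsSPO G B) (i : Fin m) :
    B i ∈ G.actions i ∧
    ∀ a ∈ G.actions i, (∑ r ∈ B i, G.delay r 1) ≤ ∑ r ∈ a, G.delay r 1 := by
  subst hm
  have hi : i = 0 := Subsingleton.elim _ _
  subst hi
  obtain ⟨h0, f, -, -, hle⟩ := h
  have hcost : ∀ (a : Finset R) (g : Fin 0 → Finset R),
      G.cost (Fin.cons a g) 0 = ∑ r ∈ a, G.delay r 1 := by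
    intro a g
    unfold CGame.cost
    rw [show (Fin.cons a g : Fin 1 → Finset R) 0 = a by simp]
    refine Finset.sum_congr rfl fun r hr => ?_
    congr 1
    unfold CGame.congestion
    rw [Finset.filter_true_of_mem, Finset.card_univ]
    · simp
    · intro j _
      have hj : j = 0 := Subsingleton.elim _ _
      subst hj
      rw [show (Fin.cons a g : Fin 1 → Finset R) 0 = a by simp]
      exact hr
  refine ⟨h0, fun a ha => ?_⟩
  have hc := hle a ha
  rwa [hcost, hcost] at hc

/-- Main induction: every 1-lookahead play starting from an optimal prefix
produces an optimal load profile. -/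
lemma main_ind (t : SPTree) (d : t.Arc → ℕ → ℝ) (hmono : ∀ r, Monotone (d r)) :
    ∀ (n : ℕ) (G : CGame t.Arc n) (L0 : List (Finset t.Arc)),
      (∀ P ∈ L0, P ∈ t.paths) →
      (∀ L', (∀ P ∈ L', P ∈ t.paths) → L'.length = L0.length →
        pot d (load L0) ≤ pot d (load L')) →
      (∀ i, G.actions i = t.paths) →
      (∀ r y, G.delay r y = d r (y + load L0 r)) →
      ∀ A, CGame.IsKLA 1 G A →
        (∀ i, A i ∈ t.paths) ∧
        (∀ L', (∀ P ∈ L', P ∈ t.paths) → L'.length = n + L0.length →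
          pot d (load (List.ofFn A ++ L0)) ≤ pot d (load L')) := by
  intro n
  induction n with
  | zero =>
    intro G L0 hL0 hopt hact hdel A _
    refine ⟨fun i => i.elim0, fun L' hL' hlen => ?_⟩
    have h0 : List.ofFn A = [] := by simp
    rw [h0, List.nil_append]
    exact hopt L' hL' (by omega)
  | succ n ih =>
    intro G L0 hL0 hopt hact hdel A hA
    obtain ⟨⟨hk, B, hSPO, hB0⟩, htail⟩ := hA
    have hone : min 1 (n + 1) = 1 := by omega
    have hsp := spo_one hone (G.truncate 1) B hSPO ⟨0, hk⟩
    rw [hB0] at hsp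
    have hA0 : A 0 ∈ t.paths := by
      have h1 := hsp.1
      rwa [show (G.truncate 1).actions ⟨0, hk⟩ = t.paths from hact _] at h1
    have hmin : ∀ a ∈ t.paths,
        (∑ r ∈ A 0, d r (load L0 r + 1)) ≤ ∑ r ∈ a, d r (load L0 r + 1) := by
      intro a ha
      have h2 := hsp.2 a
        (by rw [show (G.truncate 1).actions ⟨0, hk⟩ = t.paths from hact _]; exact ha)
      have e : ∀ S : Finset t.Arc,
          (∑ r ∈ S, (G.truncate 1).delay r 1) = ∑ r ∈ S, d r (load L0 r + 1) := by
        intro S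
        refine Finset.sum_congr rfl fun r _ => ?_
        show G.delay r 1 = _
        rw [hdel, Nat.add_comm]
      rw [e, e] at h2
      exact h2
    have hL0' : ∀ P ∈ A 0 :: L0, P ∈ t.paths := by
      intro P hP
      rcases List.mem_cons.1 hP with rfl | hP
      · exact hA0
      · exact hL0 P hP
    have hopt' := greedy_step t d hmono L0 hL0 hopt (A 0) hA0 hmin
    have hopt'' : ∀ L', (∀ P ∈ L', P ∈ t.paths) → L'.length = (A 0 :: L0).length →
        pot d (load (A 0 :: L0)) ≤ pot d (load L') := by
      intro L' h1 h2
      exact hopt' L' h1 (by simpa using h2)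
    have hdel' : ∀ r y, (G.subgame (A 0)).delay r y = d r (y + load (A 0 :: L0) r) := by
      intro r y
      show G.delay r (y + if r ∈ A 0 then 1 else 0) = _
      rw [hdel, load_cons]
      congr 1
      by_cases h : r ∈ A 0 <;> simp [h] <;> omega
    have hact' : ∀ i : Fin n, (G.subgame (A 0)).actions i = t.paths := fun i => hact i.succ
    obtain ⟨hleg, hopt3⟩ := ih (G.subgame (A 0)) (A 0 :: L0) hL0' hopt'' hact' hdel'
      (Fin.tail A) htail
    constructor
    · intro i
      exact Fin.cases hA0 (fun j => hleg j) i
    · intro L' hL' hlen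
      have heq : ∀ r, load (List.ofFn A ++ L0) r
          = load (List.ofFn (Fin.tail A) ++ (A 0 :: L0)) r := by
        intro r
        have h0 : List.ofFn A = A 0 :: List.ofFn (Fin.tail A) := by
          rw [List.ofFn_succ]
          rfl
        rw [h0]
        simp
        omega
      rw [pot_congr heq]
      exact hopt3 L' hL' (by simp only [List.length_cons]; omega)

lemma load_ofFn {R : Type} [DecidableEq R] [Fintype R] :
    ∀ {n : ℕ} (g : Fin n → Finset R) (r : R),
      load (List.ofFn g) r = (Finset.univ.filter fun i => r ∈ g i).card := by
  intro n
  induction n with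
  | zero => intro g r; simp [load]
  | succ n ih =>
    intro g r
    rw [List.ofFn_succ, load_cons, ih, Finset.card_filter, Finset.card_filter,
      Fin.sum_univ_succ]
    by_cases h : r ∈ g 0 <;> simp [h, add_comm]

end SPProof

/-- For every symmetric network congestion game on a series-parallel
graph, all 1-lookahead outcomes have the same value of Rosenthal's potential. -/
theorem sp_one_lookahead_same_potential (t : SPTree) (d : t.Arc → ℕ → ℝ)
    (hmono : ∀ r, Monotone (d r)) (hnonneg : ∀ r m, 0 ≤ d r m)
    (n : ℕ) (A B : Fin n → Finset t.Arc)
    (hA : CGame.IsKLO 1 (SNCGsp t d n) A) (hB : CGame.IsKLO 1 (SNCGsp t d n) B) :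
    CGame.potential (SNCGsp t d n) A = CGame.potential (SNCGsp t d n) B := by
    classical
  have empt : ∀ L' : List (Finset t.Arc), (∀ P ∈ L', P ∈ t.paths) →
      L'.length = ([] : List (Finset t.Arc)).length →
      SPProof.pot d (SPProof.load ([] : List (Finset t.Arc)))
        ≤ SPProof.pot d (SPProof.load L') := by
    intro L' _ h
    have h0 : L' = [] := List.length_eq_zero_iff.1 (by simpa using h)
    subst h0
    exact le_rfl
  have key : ∀ C : Fin n → Finset t.Arc, CGame.IsKLO 1 (SNCGsp t d n) C →
      ∃ LC : List (Finset t.Arc), (∀ P ∈ LC, P ∈ t.paths) ∧ LC.length = n ∧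
        CGame.potential (SNCGsp t d n) C = SPProof.pot d (SPProof.load LC) ∧
        (∀ L', (∀ P ∈ L', P ∈ t.paths) → L'.length = n →
          SPProof.pot d (SPProof.load LC) ≤ SPProof.pot d (SPProof.load L')) := by
    intro C hC
    obtain ⟨σ, hσ⟩ := hC
    obtain ⟨hleg, hopt⟩ := SPProof.main_ind t d hmono n ((SNCGsp t d n).reorder σ) []
      (by simp) empt (fun i => rfl)
      (fun r y => by show d r y = _; simp) (C ∘ σ) hσ
    refine ⟨List.ofFn (C ∘ σ), ?_, by simp, ?_, ?_⟩
    · intro P hP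
      obtain ⟨i, rfl⟩ := Set.mem_range.1 ((List.mem_ofFn' _ _).1 hP)
      exact hleg i
    · unfold CGame.potential SPProof.pot
      refine Finset.sum_congr rfl fun r _ => ?_
      congr 1
      rw [SPProof.load_ofFn]
      unfold CGame.congestion
      rw [Finset.card_filter, Finset.card_filter,
        ← Equiv.sum_comp σ (fun i => if r ∈ C i then 1 else 0)]
      simp [Function.comp]
    · intro L' h1 h2
      have h3 := hopt L' h1 (by simpa using h2)
      simpa using h3
  obtain ⟨LA, hA1, hA2, hA3, hA4⟩ := key A hA
  obtain ⟨LB, hB1, hB2, hB3, hB4⟩ := key B hB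
  rw [hA3, hB3]
  exact le_antisymm (hA4 LB hB1 hB2) (hB4 LA hA1 hA2)
end

section
/- For every symmetric network congestion game on a series-parallel graph, every 1-lookahead outcome is a global minimizer of the Rosenthal potential Φ over all outcomes. -/
namespace SPAux

open Finset

/-- Load of a list of "paths" on a resource. -/
def lload {α : Type*} [DecidableEq α] (L : List (Finset α)) (r : α) : ℕ :=
  L.countP (fun P => decide (r ∈ P))

lemma lload_nil {α : Type*} [DecidableEq α] (r : α) : lload ([] : List (Finset α)) r = 0 := rfl

lemma lload_cons {α : Type*} [DecidableEq α] (P : Finset α) (L : List (Finset α)) (r : α) :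
    lload (P :: L) r = (if r ∈ P then 1 else 0) + lload L r := by
  rw [lload, List.countP_cons]
  by_cases h : r ∈ P <;> simp [h, lload] <;> omega

lemma lload_le_length {α : Type*} [DecidableEq α] (L : List (Finset α)) (r : α) :
    lload L r ≤ L.length := List.countP_le_length

lemma lload_eq_length {α : Type*} [DecidableEq α] (L : List (Finset α)) (r : α)
    (h : ∀ P ∈ L, r ∈ P) : lload L r = L.length := by
  rw [lload, List.countP_eq_length]
  intro P hP; simpa using h P hP

lemma mem_glue_inl {α β : Type*} [DecidableEq α] [DecidableEq β]
    (P₁ : Finset α) (P₂ : Finset β) (r : α) :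
    Sum.inl r ∈ P₁.image Sum.inl ∪ P₂.image Sum.inr ↔ r ∈ P₁ := by simp

lemma mem_glue_inr {α β : Type*} [DecidableEq α] [DecidableEq β]
    (P₁ : Finset α) (P₂ : Finset β) (r : β) :
    Sum.inr r ∈ P₁.image Sum.inl ∪ P₂.image Sum.inr ↔ r ∈ P₂ := by simp

/-- Every path of a series-parallel graph is nonempty. -/
lemma paths_nonempty (t : SPTree) : ∀ P ∈ t.paths, P.Nonempty := by
  induction t with
  | edge =>
      intro P hP
      erw [SPTree.paths, Finset.mem_singleton] at hP
      subst hP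
      exact ⟨(), Finset.mem_univ _⟩
  | series t₁ t₂ ih₁ ih₂ =>
      intro P hP
      erw [SPTree.paths, Finset.mem_image] at hP
      obtain ⟨⟨P₁, P₂⟩, hp, rfl⟩ := hP
      obtain ⟨a, ha⟩ := ih₁ P₁ (Finset.mem_product.1 hp).1
      exact ⟨Sum.inl a, Finset.mem_union_left _ (Finset.mem_image_of_mem _ ha)⟩
  | parallel t₁ t₂ ih₁ ih₂ =>
      intro P hP
      erw [SPTree.paths, Finset.mem_union] at hP
      rcases hP with hP | hP
      · obtain ⟨P₁, h₁, rfl⟩ := Finset.mem_image.1 hP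
        obtain ⟨a, ha⟩ := ih₁ P₁ h₁
        exact ⟨Sum.inl a, Finset.mem_image_of_mem _ ha⟩
      · obtain ⟨P₂, h₂, rfl⟩ := Finset.mem_image.1 hP
        obtain ⟨a, ha⟩ := ih₂ P₂ h₂
        exact ⟨Sum.inr a, Finset.mem_image_of_mem _ ha⟩

lemma mem_paths_series {t₁ t₂ : SPTree} {P₁ : Finset t₁.Arc} {P₂ : Finset t₂.Arc}
    (h₁ : P₁ ∈ t₁.paths) (h₂ : P₂ ∈ t₂.paths) :
    P₁.image Sum.inl ∪ P₂.image Sum.inr ∈ (SPTree.series t₁ t₂).paths := by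
  erw [SPTree.paths, Finset.mem_image]
  exact ⟨(P₁, P₂), Finset.mem_product.2 ⟨h₁, h₂⟩, rfl⟩

lemma mem_paths_parallel_inl {t₁ t₂ : SPTree} {P₁ : Finset t₁.Arc} (h₁ : P₁ ∈ t₁.paths) :
    P₁.image Sum.inl ∈ (SPTree.parallel t₁ t₂).paths := by
  erw [SPTree.paths, Finset.mem_union]
  exact Or.inl (Finset.mem_image_of_mem _ h₁)

lemma mem_paths_parallel_inr {t₁ t₂ : SPTree} {P₂ : Finset t₂.Arc} (h₂ : P₂ ∈ t₂.paths) :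
    P₂.image Sum.inr ∈ (SPTree.parallel t₁ t₂).paths := by
  erw [SPTree.paths, Finset.mem_union]
  exact Or.inr (Finset.mem_image_of_mem _ h₂)

end SPAux
namespace SPAux

lemma split_ser {t₁ t₂ : SPTree} :
    ∀ L : List (Finset (SPTree.series t₁ t₂).Arc),
      (∀ P ∈ L, P ∈ (SPTree.series t₁ t₂).paths) →
      ∃ (L₁ : List (Finset t₁.Arc)) (L₂ : List (Finset t₂.Arc)),
        (∀ Q ∈ L₁, Q ∈ t₁.paths) ∧ (∀ Q ∈ L₂, Q ∈ t₂.paths) ∧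
        L₁.length = L.length ∧ L₂.length = L.length ∧
        (∀ r, lload L (Sum.inl r) = lload L₁ r) ∧
        (∀ r, lload L (Sum.inr r) = lload L₂ r) := by
  intro L
  induction L with
  | nil =>
      intro _
      exact ⟨[], [], by simp, by simp, rfl, rfl, fun r => rfl, fun r => rfl⟩
  | cons P L ih =>
      intro hL
      obtain ⟨L₁, L₂, h₁, h₂, hl₁, hl₂, hc₁, hc₂⟩ := ih (fun Q hQ => hL Q (List.mem_cons_of_mem _ hQ))
      have hP := hL P (List.mem_cons_self)
      erw [SPTree.paths, Finset.mem_image] at hP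
      obtain ⟨⟨P₁, P₂⟩, hp, rfl⟩ := hP
      obtain ⟨hp₁, hp₂⟩ := Finset.mem_product.1 hp
      refine ⟨P₁ :: L₁, P₂ :: L₂, ?_, ?_, by simp [hl₁], by simp [hl₂], ?_, ?_⟩
      · intro Q hQ; rcases List.mem_cons.1 hQ with rfl | hQ
        · exact hp₁
        · exact h₁ Q hQ
      · intro Q hQ; rcases List.mem_cons.1 hQ with rfl | hQ
        · exact hp₂
        · exact h₂ Q hQ
      · intro r; erw [lload_cons, lload_cons, hc₁ r]; split_ifs with h1 h2 h3 <;> first | rfl | exact absurd ((mem_glue_inl P₁ P₂ r).1 h1) h2 | exact absurd ((mem_glue_inl P₁ P₂ r).2 h3) h1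
      · intro r; erw [lload_cons, lload_cons, hc₂ r]; split_ifs with h1 h2 h3 <;> first | rfl | exact absurd ((mem_glue_inr P₁ P₂ r).1 h1) h2 | exact absurd ((mem_glue_inr P₁ P₂ r).2 h3) h1

lemma split_par {t₁ t₂ : SPTree} :
    ∀ L : List (Finset (SPTree.parallel t₁ t₂).Arc),
      (∀ P ∈ L, P ∈ (SPTree.parallel t₁ t₂).paths) →
      ∃ (L₁ : List (Finset t₁.Arc)) (L₂ : List (Finset t₂.Arc)),
        (∀ Q ∈ L₁, Q ∈ t₁.paths) ∧ (∀ Q ∈ L₂, Q ∈ t₂.paths) ∧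
        L₁.length + L₂.length = L.length ∧
        (∀ r, lload L (Sum.inl r) = lload L₁ r) ∧
        (∀ r, lload L (Sum.inr r) = lload L₂ r) := by
  intro L
  induction L with
  | nil =>
      intro _
      exact ⟨[], [], by simp, by simp, rfl, fun r => rfl, fun r => rfl⟩
  | cons P L ih =>
      intro hL
      obtain ⟨L₁, L₂, h₁, h₂, hl, hc₁, hc₂⟩ := ih (fun Q hQ => hL Q (List.mem_cons_of_mem _ hQ))
      have hP := hL P (List.mem_cons_self)
      erw [SPTree.paths, Finset.mem_union] at hP
      rcases hP with hP | hP
      · obtain ⟨P₁, hp₁, rfl⟩ := Finset.mem_image.1 hP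
        refine ⟨P₁ :: L₁, L₂, ?_, h₂, by simp [← hl]; omega, ?_, ?_⟩
        · intro Q hQ; rcases List.mem_cons.1 hQ with rfl | hQ
          · exact hp₁
          · exact h₁ Q hQ
        · intro r; erw [lload_cons, lload_cons, hc₁ r]; split_ifs with h1 h2 h3 <;> first | rfl | exact absurd ((by simp : Sum.inl r ∈ Finset.image (Sum.inl : t₁.Arc → t₁.Arc ⊕ t₂.Arc) P₁ ↔ r ∈ P₁).1 h1) h2 | exact absurd ((by simp : Sum.inl r ∈ Finset.image (Sum.inl : t₁.Arc → t₁.Arc ⊕ t₂.Arc) P₁ ↔ r ∈ P₁).2 h3) h1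
        · intro r; erw [lload_cons, hc₂ r]; exact (congrArg (· + _) (if_neg (by simp : Sum.inr r ∉ Finset.image (Sum.inl : t₁.Arc → t₁.Arc ⊕ t₂.Arc) P₁))).trans (Nat.zero_add _)
      · obtain ⟨P₂, hp₂, rfl⟩ := Finset.mem_image.1 hP
        refine ⟨L₁, P₂ :: L₂, h₁, ?_, by simp [← hl]; omega, ?_, ?_⟩
        · intro Q hQ; rcases List.mem_cons.1 hQ with rfl | hQ
          · exact hp₂
          · exact h₂ Q hQ
        · intro r; erw [lload_cons, hc₁ r]; exact (congrArg (· + _) (if_neg (by simp : Sum.inl r ∉ Finset.image (Sum.inr : t₂.Arc → t₁.Arc ⊕ t₂.Arc) P₂))).trans (Nat.zero_add _)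
        · intro r; erw [lload_cons, lload_cons, hc₂ r]; split_ifs with h1 h2 h3 <;> first | rfl | exact absurd ((by simp : Sum.inr r ∈ Finset.image (Sum.inr : t₂.Arc → t₁.Arc ⊕ t₂.Arc) P₂ ↔ r ∈ P₂).1 h1) h2 | exact absurd ((by simp : Sum.inr r ∈ Finset.image (Sum.inr : t₂.Arc → t₁.Arc ⊕ t₂.Arc) P₂ ↔ r ∈ P₂).2 h3) h1

lemma combine_ser {t₁ t₂ : SPTree} :
    ∀ (L₁ : List (Finset t₁.Arc)) (L₂ : List (Finset t₂.Arc)),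
      L₁.length = L₂.length →
      (∀ Q ∈ L₁, Q ∈ t₁.paths) → (∀ Q ∈ L₂, Q ∈ t₂.paths) →
      ∃ L : List (Finset (SPTree.series t₁ t₂).Arc),
        (∀ P ∈ L, P ∈ (SPTree.series t₁ t₂).paths) ∧
        L.length = L₁.length ∧
        (∀ r, lload L (Sum.inl r) = lload L₁ r) ∧
        (∀ r, lload L (Sum.inr r) = lload L₂ r) := by
  intro L₁
  induction L₁ with
  | nil =>
      intro L₂ hlen _ _
      refine ⟨[], by simp, rfl, fun r => ?_, fun r => ?_⟩ <;>
        · have : L₂ = [] := List.length_eq_zero_iff.1 hlen.symm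
          subst this; rfl
  | cons P₁ L₁ ih =>
      intro L₂ hlen h₁ h₂
      cases L₂ with
      | nil => simp at hlen
      | cons P₂ L₂ =>
          obtain ⟨L, hL, hlenL, hc₁, hc₂⟩ := ih L₂ (by simpa using hlen)
            (fun Q hQ => h₁ Q (List.mem_cons_of_mem _ hQ))
            (fun Q hQ => h₂ Q (List.mem_cons_of_mem _ hQ))
          refine ⟨(P₁.image Sum.inl ∪ P₂.image Sum.inr) :: L, ?_, by simp [hlenL], ?_, ?_⟩
          · intro P hP; rcases List.mem_cons.1 hP with rfl | hP
            · exact mem_paths_series (h₁ P₁ (List.mem_cons_self)) (h₂ P₂ (List.mem_cons_self))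
            · exact hL P hP
          · intro r; erw [lload_cons, lload_cons, hc₁ r]; split_ifs with h1 h2 h3 <;> first | rfl | exact absurd ((mem_glue_inl P₁ P₂ r).1 h1) h2 | exact absurd ((mem_glue_inl P₁ P₂ r).2 h3) h1
          · intro r; erw [lload_cons, lload_cons, hc₂ r]; split_ifs with h1 h2 h3 <;> first | rfl | exact absurd ((mem_glue_inr P₁ P₂ r).1 h1) h2 | exact absurd ((mem_glue_inr P₁ P₂ r).2 h3) h1

lemma combine_par {t₁ t₂ : SPTree} :
    ∀ (L₁ : List (Finset t₁.Arc)) (L₂ : List (Finset t₂.Arc)),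
      (∀ Q ∈ L₁, Q ∈ t₁.paths) → (∀ Q ∈ L₂, Q ∈ t₂.paths) →
      ∃ L : List (Finset (SPTree.parallel t₁ t₂).Arc),
        (∀ P ∈ L, P ∈ (SPTree.parallel t₁ t₂).paths) ∧
        L.length = L₁.length + L₂.length ∧
        (∀ r, lload L (Sum.inl r) = lload L₁ r) ∧
        (∀ r, lload L (Sum.inr r) = lload L₂ r) := by
  intro L₁
  induction L₁ with
  | nil =>
      intro L₂ _ h₂
      induction L₂ with
      | nil => exact ⟨[], by simp, rfl, fun r => rfl, fun r => rfl⟩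
      | cons P₂ L₂ ih₂ =>
          obtain ⟨L, hL, hlen, hc₁, hc₂⟩ := ih₂ (fun Q hQ => h₂ Q (List.mem_cons_of_mem _ hQ))
          refine ⟨P₂.image Sum.inr :: L, ?_, by simp [hlen], ?_, ?_⟩
          · intro P hP; rcases List.mem_cons.1 hP with rfl | hP
            · exact mem_paths_parallel_inr (h₂ P₂ (List.mem_cons_self))
            · exact hL P hP
          · intro r; erw [lload_cons, hc₁ r]; exact (congrArg (· + _) (if_neg (by simp : Sum.inl r ∉ Finset.image (Sum.inr : t₂.Arc → t₁.Arc ⊕ t₂.Arc) P₂))).trans (Nat.zero_add _)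
          · intro r; erw [lload_cons, lload_cons, hc₂ r]; split_ifs with h1 h2 h3 <;> first | rfl | exact absurd ((by simp : Sum.inr r ∈ Finset.image (Sum.inr : t₂.Arc → t₁.Arc ⊕ t₂.Arc) P₂ ↔ r ∈ P₂).1 h1) h2 | exact absurd ((by simp : Sum.inr r ∈ Finset.image (Sum.inr : t₂.Arc → t₁.Arc ⊕ t₂.Arc) P₂ ↔ r ∈ P₂).2 h3) h1
  | cons P₁ L₁ ih =>
      intro L₂ h₁ h₂
      obtain ⟨L, hL, hlen, hc₁, hc₂⟩ := ih L₂ (fun Q hQ => h₁ Q (List.mem_cons_of_mem _ hQ)) h₂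
      refine ⟨P₁.image Sum.inl :: L, ?_, by simp [hlen]; omega, ?_, ?_⟩
      · intro P hP; rcases List.mem_cons.1 hP with rfl | hP
        · exact mem_paths_parallel_inl (h₁ P₁ (List.mem_cons_self))
        · exact hL P hP
      · intro r; erw [lload_cons, lload_cons, hc₁ r]; split_ifs with h1 h2 h3 <;> first | rfl | exact absurd ((by simp : Sum.inl r ∈ Finset.image (Sum.inl : t₁.Arc → t₁.Arc ⊕ t₂.Arc) P₁ ↔ r ∈ P₁).1 h1) h2 | exact absurd ((by simp : Sum.inl r ∈ Finset.image (Sum.inl : t₁.Arc → t₁.Arc ⊕ t₂.Arc) P₁ ↔ r ∈ P₁).2 h3) h1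
      · intro r; erw [lload_cons, hc₂ r]; exact (congrArg (· + _) (if_neg (by simp : Sum.inr r ∉ Finset.image (Sum.inl : t₁.Arc → t₁.Arc ⊕ t₂.Arc) P₁))).trans (Nat.zero_add _)

end SPAux
namespace SPAux

/-- `x` is the load vector of `k` paths in `t`. -/
def Feas (t : SPTree) (k : ℕ) (x : t.Arc → ℕ) : Prop :=
  ∃ L : List (Finset t.Arc), (∀ P ∈ L, P ∈ t.paths) ∧ L.length = k ∧ ∀ r, x r = lload L r

lemma Feas.congr {t : SPTree} {k : ℕ} {x y : t.Arc → ℕ} (h : Feas t k x)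
    (hxy : ∀ r, x r = y r) : Feas t k y := by
  obtain ⟨L, h1, h2, h3⟩ := h
  exact ⟨L, h1, h2, fun r => (hxy r).symm.trans (h3 r)⟩

lemma feas_add {t : SPTree} {k : ℕ} {x : t.Arc → ℕ} {Q : Finset t.Arc}
    (h : Feas t k x) (hQ : Q ∈ t.paths) :
    Feas t (k + 1) (fun r => x r + if r ∈ Q then 1 else 0) := by
  obtain ⟨L, h1, h2, h3⟩ := h
  refine ⟨Q :: L, ?_, by simp [h2], fun r => ?_⟩
  · intro P hP; rcases List.mem_cons.1 hP with rfl | hP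
    · exact hQ
    · exact h1 P hP
  · rw [lload_cons]; simp only [h3 r]; exact Nat.add_comm _ _

/-- In a series-parallel graph, if `y` carries strictly more paths than `x`, then there
is a path along which `y` exceeds `x` everywhere. -/
lemma exists_path_ge (t : SPTree) :
    ∀ (k l : ℕ) (x y : t.Arc → ℕ), Feas t k x → Feas t l y → k < l →
      ∃ Q ∈ t.paths, ∀ r ∈ Q, x r + 1 ≤ y r := by
  induction t with
  | edge =>
      intro k l x y ⟨L, hL, hLl, hLx⟩ ⟨M, hM, hMl, hMy⟩ hkl
      refine ⟨Finset.univ, by rw [SPTree.paths]; exact Finset.mem_singleton_self _, ?_⟩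
      intro r _
      have hx : x r = k := by
        rw [hLx r, lload_eq_length, hLl]
        intro P hP
        have := hL P hP; erw [SPTree.paths, Finset.mem_singleton] at this
        subst this; exact Finset.mem_univ _
      have hy : y r = l := by
        rw [hMy r, lload_eq_length, hMl]
        intro P hP
        have := hM P hP; erw [SPTree.paths, Finset.mem_singleton] at this
        subst this; exact Finset.mem_univ _
      omega
  | series t₁ t₂ ih₁ ih₂ =>
      intro k l x y ⟨L, hL, hLl, hLx⟩ ⟨M, hM, hMl, hMy⟩ hkl
      obtain ⟨L₁, L₂, hL₁, hL₂, hl₁, hl₂, hcL₁, hcL₂⟩ := split_ser L hL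
      obtain ⟨M₁, M₂, hM₁, hM₂, hm₁, hm₂, hcM₁, hcM₂⟩ := split_ser M hM
      obtain ⟨Q₁, hQ₁, hge₁⟩ := ih₁ k l (fun a => x (Sum.inl a)) (fun a => y (Sum.inl a))
        ⟨L₁, hL₁, by omega, fun a => by rw [← hcL₁ a]; exact hLx _⟩
        ⟨M₁, hM₁, by omega, fun a => by rw [← hcM₁ a]; exact hMy _⟩ hkl
      obtain ⟨Q₂, hQ₂, hge₂⟩ := ih₂ k l (fun a => x (Sum.inr a)) (fun a => y (Sum.inr a))
        ⟨L₂, hL₂, by omega, fun a => by rw [← hcL₂ a]; exact hLx _⟩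
        ⟨M₂, hM₂, by omega, fun a => by rw [← hcM₂ a]; exact hMy _⟩ hkl
      refine ⟨Q₁.image Sum.inl ∪ Q₂.image Sum.inr, mem_paths_series hQ₁ hQ₂, ?_⟩
      intro r hr
      match r with
      | Sum.inl a => exact hge₁ a ((mem_glue_inl Q₁ Q₂ a).1 hr)
      | Sum.inr a => exact hge₂ a ((mem_glue_inr Q₁ Q₂ a).1 hr)
  | parallel t₁ t₂ ih₁ ih₂ =>
      intro k l x y ⟨L, hL, hLl, hLx⟩ ⟨M, hM, hMl, hMy⟩ hkl
      obtain ⟨L₁, L₂, hL₁, hL₂, hl, hcL₁, hcL₂⟩ := split_par L hL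
      obtain ⟨M₁, M₂, hM₁, hM₂, hm, hcM₁, hcM₂⟩ := split_par M hM
      have hcase : L₁.length < M₁.length ∨ L₂.length < M₂.length := by omega
      rcases hcase with hc | hc
      · obtain ⟨Q₁, hQ₁, hge₁⟩ := ih₁ L₁.length M₁.length
          (fun a => x (Sum.inl a)) (fun a => y (Sum.inl a))
          ⟨L₁, hL₁, rfl, fun a => by rw [← hcL₁ a]; exact hLx _⟩
          ⟨M₁, hM₁, rfl, fun a => by rw [← hcM₁ a]; exact hMy _⟩ hc
        refine ⟨Q₁.image Sum.inl, mem_paths_parallel_inl hQ₁, ?_⟩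
        intro r hr
        match r with
        | Sum.inl a => exact hge₁ a ((Function.Injective.mem_finset_image Sum.inl_injective).1 hr)
        | Sum.inr a => erw [Finset.mem_image] at hr; simp at hr
      · obtain ⟨Q₂, hQ₂, hge₂⟩ := ih₂ L₂.length M₂.length
          (fun a => x (Sum.inr a)) (fun a => y (Sum.inr a))
          ⟨L₂, hL₂, rfl, fun a => by rw [← hcL₂ a]; exact hLx _⟩
          ⟨M₂, hM₂, rfl, fun a => by rw [← hcM₂ a]; exact hMy _⟩ hc
        refine ⟨Q₂.image Sum.inr, mem_paths_parallel_inr hQ₂, ?_⟩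
        intro r hr
        match r with
        | Sum.inl a => erw [Finset.mem_image] at hr; simp at hr
        | Sum.inr a => exact hge₂ a ((Function.Injective.mem_finset_image Sum.inr_injective).1 hr)

/-- Removing one unit of flow along a path contained in the support. -/
lemma feas_sub (t : SPTree) :
    ∀ (k : ℕ) (x : t.Arc → ℕ) (Q : Finset t.Arc), Feas t (k + 1) x → Q ∈ t.paths →
      (∀ r ∈ Q, 1 ≤ x r) →
      Feas t k (fun r => x r - if r ∈ Q then 1 else 0) := by
  induction t with
  | edge =>
      intro k x Q ⟨L, hL, hLl, hLx⟩ hQ hsupp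
      erw [SPTree.paths, Finset.mem_singleton] at hQ
      subst hQ
      refine ⟨List.replicate k Finset.univ, ?_, by simp, fun r => ?_⟩
      · intro P hP
        rw [List.eq_of_mem_replicate hP, SPTree.paths]
        exact Finset.mem_singleton_self _
      · have hx : x r = k + 1 := by
          rw [hLx r, lload_eq_length, hLl]
          intro P hP
          have := hL P hP; erw [SPTree.paths, Finset.mem_singleton] at this
          subst this; exact Finset.mem_univ _
        have : lload (List.replicate k (Finset.univ : Finset SPTree.edge.Arc)) r = k := by
          rw [lload_eq_length, List.length_replicate]
          intro P hP
          rw [List.eq_of_mem_replicate hP]; exact Finset.mem_univ _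
        simp only [this, hx]
        cases r
        split_ifs with h
        · omega
        · exact absurd (Finset.mem_univ _) h
  | series t₁ t₂ ih₁ ih₂ =>
      intro k x Q ⟨L, hL, hLl, hLx⟩ hQ hsupp
      erw [SPTree.paths, Finset.mem_image] at hQ
      obtain ⟨⟨Q₁, Q₂⟩, hq, rfl⟩ := hQ
      obtain ⟨hq₁, hq₂⟩ := Finset.mem_product.1 hq
      obtain ⟨L₁, L₂, hL₁, hL₂, hl₁, hl₂, hcL₁, hcL₂⟩ := split_ser L hL
      obtain ⟨N₁, hN₁a, hN₁l, hN₁c⟩ := ih₁ k (fun a => x (Sum.inl a)) Q₁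
        ⟨L₁, hL₁, by omega, fun a => by rw [← hcL₁ a]; exact hLx _⟩ hq₁
        (fun a ha => hsupp _ ((mem_glue_inl Q₁ Q₂ a).2 ha))
      obtain ⟨N₂, hN₂a, hN₂l, hN₂c⟩ := ih₂ k (fun a => x (Sum.inr a)) Q₂
        ⟨L₂, hL₂, by omega, fun a => by rw [← hcL₂ a]; exact hLx _⟩ hq₂
        (fun a ha => hsupp _ ((mem_glue_inr Q₁ Q₂ a).2 ha))
      obtain ⟨N, hNa, hNl, hNc₁, hNc₂⟩ := combine_ser N₁ N₂ (by omega) hN₁a hN₂a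
      refine ⟨N, hNa, by omega, fun r => ?_⟩
      match r with
      | Sum.inl a =>
          have hiff : ((Sum.inl a : (SPTree.series t₁ t₂).Arc) ∈
              Q₁.image Sum.inl ∪ Q₂.image Sum.inr) ↔ a ∈ Q₁ := mem_glue_inl Q₁ Q₂ a
          simp only [hNc₁ a, ← hN₁c a, hiff]
          split_ifs with h1 h2 h3 <;> first | rfl | exact absurd (hiff.1 h1) h2 | exact absurd (hiff.2 h3) h1
      | Sum.inr a =>
          have hiff : ((Sum.inr a : (SPTree.series t₁ t₂).Arc) ∈
              Q₁.image Sum.inl ∪ Q₂.image Sum.inr) ↔ a ∈ Q₂ := mem_glue_inr Q₁ Q₂ a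
          simp only [hNc₂ a, ← hN₂c a, hiff]
          split_ifs with h1 h2 h3 <;> first | rfl | exact absurd (hiff.1 h1) h2 | exact absurd (hiff.2 h3) h1
  | parallel t₁ t₂ ih₁ ih₂ =>
      intro k x Q ⟨L, hL, hLl, hLx⟩ hQ hsupp
      obtain ⟨L₁, L₂, hL₁, hL₂, hl, hcL₁, hcL₂⟩ := split_par L hL
      erw [SPTree.paths, Finset.mem_union] at hQ
      rcases hQ with hQ | hQ
      · obtain ⟨Q₁, hq₁, rfl⟩ := Finset.mem_image.1 hQ
        obtain ⟨a₀, ha₀⟩ := paths_nonempty t₁ Q₁ hq₁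
        have hpos : 1 ≤ L₁.length := by
          have h1 : 1 ≤ x (Sum.inl a₀) := hsupp _ (Finset.mem_image_of_mem _ ha₀)
          have h2 : x (Sum.inl a₀) = lload L₁ a₀ := by rw [← hcL₁ a₀]; exact hLx _
          have := lload_le_length L₁ a₀
          omega
        obtain ⟨k₁, hk₁⟩ : ∃ k₁, L₁.length = k₁ + 1 := ⟨L₁.length - 1, by omega⟩
        obtain ⟨N₁, hN₁a, hN₁l, hN₁c⟩ := ih₁ k₁ (fun a => x (Sum.inl a)) Q₁
          ⟨L₁, hL₁, hk₁, fun a => by rw [← hcL₁ a]; exact hLx _⟩ hq₁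
          (fun a ha => hsupp _ (Finset.mem_image_of_mem _ ha))
        obtain ⟨N, hNa, hNl, hNc₁, hNc₂⟩ := combine_par N₁ L₂ hN₁a hL₂
        refine ⟨N, hNa, by omega, fun r => ?_⟩
        match r with
        | Sum.inl a =>
            have hiff : ((Sum.inl a : (SPTree.parallel t₁ t₂).Arc) ∈ Q₁.image Sum.inl) ↔ a ∈ Q₁ := by
              simp [SPTree.Arc]
            simp only [hNc₁ a, ← hN₁c a, hiff]
            split_ifs with h1 h2 h3 <;> first | rfl | exact absurd (hiff.1 h1) h2 | exact absurd (hiff.2 h3) h1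
        | Sum.inr a =>
            have hiff : ((Sum.inr a : (SPTree.parallel t₁ t₂).Arc) ∈ Q₁.image Sum.inl) ↔ False := by
              simp [SPTree.Arc]
            simp only [hNc₂ a, ← hcL₂ a, ← hLx (Sum.inr a), hiff, if_false, Nat.sub_zero]
            exact (congrArg (fun z => x _ - z) (if_congr hiff rfl rfl)).trans (by simp)
      · obtain ⟨Q₂, hq₂, rfl⟩ := Finset.mem_image.1 hQ
        obtain ⟨a₀, ha₀⟩ := paths_nonempty t₂ Q₂ hq₂
        have hpos : 1 ≤ L₂.length := by
          have h1 : 1 ≤ x (Sum.inr a₀) := hsupp _ (Finset.mem_image_of_mem _ ha₀)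
          have h2 : x (Sum.inr a₀) = lload L₂ a₀ := by rw [← hcL₂ a₀]; exact hLx _
          have := lload_le_length L₂ a₀
          omega
        obtain ⟨k₂, hk₂⟩ : ∃ k₂, L₂.length = k₂ + 1 := ⟨L₂.length - 1, by omega⟩
        obtain ⟨N₂, hN₂a, hN₂l, hN₂c⟩ := ih₂ k₂ (fun a => x (Sum.inr a)) Q₂
          ⟨L₂, hL₂, hk₂, fun a => by rw [← hcL₂ a]; exact hLx _⟩ hq₂
          (fun a ha => hsupp _ (Finset.mem_image_of_mem _ ha))
        obtain ⟨N, hNa, hNl, hNc₁, hNc₂⟩ := combine_par L₁ N₂ hL₁ hN₂a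
        refine ⟨N, hNa, by omega, fun r => ?_⟩
        match r with
        | Sum.inl a =>
            have hiff : ((Sum.inl a : (SPTree.parallel t₁ t₂).Arc) ∈ Q₂.image Sum.inr) ↔ False := by
              simp [SPTree.Arc]
            simp only [hNc₁ a, ← hcL₁ a, ← hLx (Sum.inl a), hiff, if_false, Nat.sub_zero]
            exact (congrArg (fun z => x _ - z) (if_congr hiff rfl rfl)).trans (by simp)
        | Sum.inr a =>
            have hiff : ((Sum.inr a : (SPTree.parallel t₁ t₂).Arc) ∈ Q₂.image Sum.inr) ↔ a ∈ Q₂ := by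
              simp [SPTree.Arc]
            simp only [hNc₂ a, ← hN₂c a, hiff]
            split_ifs with h1 h2 h3 <;> first | rfl | exact absurd (hiff.1 h1) h2 | exact absurd (hiff.2 h3) h1

end SPAux
namespace SPAux

/-- Rosenthal potential of a load vector. -/
def Phi {R : Type} [Fintype R] (d : R → ℕ → ℝ) (x : R → ℕ) : ℝ :=
  ∑ r, ∑ i ∈ Finset.Icc 1 (x r), d r i

lemma Phi_add {R : Type} [Fintype R] [DecidableEq R] (d : R → ℕ → ℝ) (x : R → ℕ)
    (Q : Finset R) :
    Phi d (fun r => x r + if r ∈ Q then 1 else 0) = Phi d x + ∑ r ∈ Q, d r (x r + 1) := by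
  unfold Phi
  have key : ∀ r, ∑ i ∈ Finset.Icc 1 (x r + if r ∈ Q then 1 else 0), d r i
      = (∑ i ∈ Finset.Icc 1 (x r), d r i) + (if r ∈ Q then d r (x r + 1) else 0) := by
    intro r
    by_cases h : r ∈ Q
    · simp only [h, if_true]
      exact Finset.sum_Icc_succ_top (Nat.succ_le_succ (Nat.zero_le _)) _
    · simp [h]
  rw [Finset.sum_congr rfl (fun r _ => key r), Finset.sum_add_distrib]
  congr 1
  rw [Finset.sum_ite_mem, Finset.univ_inter]

lemma greedy_step (t : SPTree) (d : t.Arc → ℕ → ℝ) (hmono : ∀ r, Monotone (d r))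
    {k : ℕ} {x : t.Arc → ℕ} (hx : Feas t k x) (hmin : ∀ y, Feas t k y → Phi d x ≤ Phi d y)
    {P : Finset t.Arc} (hP : P ∈ t.paths)
    (hgr : ∀ S ∈ t.paths, (∑ r ∈ P, d r (x r + 1)) ≤ ∑ r ∈ S, d r (x r + 1)) :
    ∀ y, Feas t (k + 1) y → Phi d (fun r => x r + if r ∈ P then 1 else 0) ≤ Phi d y := by
  intro y hy
  obtain ⟨Q, hQ, hQle⟩ := exists_path_ge t k (k + 1) x y hx hy (Nat.lt_succ_self k)
  have hsupp : ∀ r ∈ Q, 1 ≤ y r := fun r hr => le_trans (Nat.le_add_left 1 (x r)) (hQle r hr)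
  have hy'feas : Feas t k (fun r => y r - if r ∈ Q then 1 else 0) := feas_sub t k y Q hy hQ hsupp
  set y' : t.Arc → ℕ := fun r => y r - if r ∈ Q then 1 else 0 with hy'
  have hyrepr : y = fun r => y' r + if r ∈ Q then 1 else 0 := by
    funext r
    by_cases h : r ∈ Q
    · have := hsupp r h
      simp only [hy', h, if_true]
      omega
    · simp [hy', h]
  have hyeq : Phi d y = Phi d y' + ∑ r ∈ Q, d r (y' r + 1) := by
    conv_lhs => rw [hyrepr]
    exact Phi_add d y' Q
  have h1 : ∑ r ∈ Q, d r (y' r + 1) = ∑ r ∈ Q, d r (y r) := by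
    refine Finset.sum_congr rfl fun r hr => ?_
    have := hsupp r hr
    have : y' r + 1 = y r := by simp only [hy', if_pos hr]; omega
    rw [this]
  rw [Phi_add]
  calc Phi d x + ∑ r ∈ P, d r (x r + 1)
      ≤ Phi d y' + ∑ r ∈ Q, d r (x r + 1) :=
        add_le_add (hmin y' hy'feas) (hgr Q hQ)
    _ ≤ Phi d y' + ∑ r ∈ Q, d r (y r) :=
        add_le_add_right (Finset.sum_le_sum fun r hr => hmono r (hQle r hr)) _
    _ = Phi d y := by rw [hyeq, h1]

end SPAux
namespace SPAux

open Finset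

def loadc {R : Type} [DecidableEq R] {n : ℕ} (A : Fin n → Finset R) (r : R) : ℕ :=
  (Finset.univ.filter fun i => r ∈ A i).card

lemma loadc_zero {R : Type} [DecidableEq R] (A : Fin 0 → Finset R) (r : R) : loadc A r = 0 := by
  simp [loadc]

lemma loadc_succ {R : Type} [DecidableEq R] {n : ℕ} (A : Fin (n + 1) → Finset R) (r : R) :
    loadc A r = (if r ∈ A 0 then 1 else 0) + loadc (Fin.tail A) r := by
  unfold loadc
  rw [Finset.card_filter, Finset.card_filter, Fin.sum_univ_succ]
  rfl

lemma lload_ofFn {R : Type} [DecidableEq R] :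
    ∀ {n : ℕ} (A : Fin n → Finset R) (r : R), lload (List.ofFn A) r = loadc A r := by
  intro n
  induction n with
  | zero => intro A r; simp [lload, loadc]
  | succ n ih =>
      intro A r
      rw [List.ofFn_succ, lload_cons, ih, loadc_succ]
      rfl

def shiftG (t : SPTree) (d : t.Arc → ℕ → ℝ) (n : ℕ) (x₀ : t.Arc → ℕ) : CGame t.Arc n where
  actions := fun _ => t.paths
  delay := fun r y => d r (y + x₀ r)

lemma subgame_shiftG (t : SPTree) (d : t.Arc → ℕ → ℝ) {n : ℕ} (x₀ : t.Arc → ℕ)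
    (a : Finset t.Arc) :
    (shiftG t d (n + 1) x₀).subgame a
      = shiftG t d n (fun r => x₀ r + if r ∈ a then 1 else 0) := by
  show CGame.mk _ _ = CGame.mk _ _
  congr 1
  funext r y
  show d r (y + (if r ∈ a then 1 else 0) + x₀ r) = d r (y + (x₀ r + if r ∈ a then 1 else 0))
  congr 1
  by_cases h : r ∈ a <;> simp [h] <;> omega

lemma cost_one {R : Type} [DecidableEq R] [Fintype R] (G : CGame R 1) (A : Fin 1 → Finset R) :
    G.cost A 0 = ∑ r ∈ A 0, G.delay r 1 := by
  unfold CGame.cost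
  refine Finset.sum_congr rfl fun r hr => ?_
  congr 1
  unfold CGame.congestion
  rw [Finset.filter_true_of_mem, Finset.card_univ, Fintype.card_fin]
  intro i _
  have : i = 0 := Subsingleton.elim _ _
  rwa [this]

lemma spo_one {R : Type} [DecidableEq R] [Fintype R] {m : ℕ} (hm : m = 1) (G : CGame R m)
    (B : Fin m → Finset R) (h : CGame.IsSPO G B) (i : Fin m) :
    B i ∈ G.actions i ∧
      ∀ a ∈ G.actions i, (∑ r ∈ B i, G.delay r 1) ≤ ∑ r ∈ a, G.delay r 1 := by
  subst hm
  have hi : i = 0 := Subsingleton.elim _ _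
  subst hi
  obtain ⟨h0, f, -, -, hmin⟩ := h
  refine ⟨h0, fun a ha => ?_⟩
  have := hmin a ha
  rwa [cost_one, cost_one, Fin.cons_zero, Fin.cons_zero] at this

end SPAux
namespace SPAux

lemma main_ind (t : SPTree) (d : t.Arc → ℕ → ℝ) (hmono : ∀ r, Monotone (d r)) :
    ∀ (n : ℕ) (x₀ : t.Arc → ℕ) (k : ℕ), Feas t k x₀ →
      (∀ y, Feas t k y → Phi d x₀ ≤ Phi d y) →
      ∀ A : Fin n → Finset t.Arc, CGame.IsKLA 1 (shiftG t d n x₀) A →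
      Feas t (k + n) (fun r => x₀ r + loadc A r) ∧
        ∀ y, Feas t (k + n) y → Phi d (fun r => x₀ r + loadc A r) ≤ Phi d y := by
  intro n
  induction n with
  | zero =>
      intro x₀ k hf hm A _
      have hfun : (fun r => x₀ r + loadc A r) = x₀ := by
        funext r; rw [loadc_zero, Nat.add_zero]
      rw [hfun]
      exact ⟨hf, hm⟩
  | succ n ih =>
      intro x₀ k hf hm A hA
      obtain ⟨⟨hk, B, hSPO, hB0⟩, htail⟩ := hA
      have h1 := spo_one (by omega) _ B hSPO ⟨0, hk⟩
      rw [hB0] at h1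
      have hA0 : A 0 ∈ t.paths := h1.1
      have hgr : ∀ S ∈ t.paths, (∑ r ∈ A 0, d r (x₀ r + 1)) ≤ ∑ r ∈ S, d r (x₀ r + 1) := by
        intro S hS
        have h2 := h1.2 S hS
        have hconv : ∀ T : Finset t.Arc,
            (∑ r ∈ T, ((shiftG t d (n+1) x₀).truncate 1).delay r 1) = ∑ r ∈ T, d r (x₀ r + 1) := by
          intro T
          refine Finset.sum_congr rfl fun r _ => ?_
          show d r (1 + x₀ r) = d r (x₀ r + 1)
          rw [Nat.add_comm]
        rwa [hconv, hconv] at h2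
      set x₁ : t.Arc → ℕ := fun r => x₀ r + if r ∈ A 0 then 1 else 0 with hx₁
      have hf1 : Feas t (k + 1) x₁ := feas_add hf hA0
      have hm1 : ∀ y, Feas t (k + 1) y → Phi d x₁ ≤ Phi d y :=
        greedy_step t d hmono hf hm hA0 hgr
      have htail' : CGame.IsKLA 1 (shiftG t d n x₁) (Fin.tail A) := by
        rw [hx₁, ← subgame_shiftG]
        exact htail
      obtain ⟨hfeas, hmin⟩ := ih x₁ (k + 1) hf1 hm1 (Fin.tail A) htail'
      have hfun : (fun r => x₀ r + loadc A r) = (fun r => x₁ r + loadc (Fin.tail A) r) := by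
        funext r
        rw [loadc_succ, hx₁]
        ring
      have hnum : k + (n + 1) = k + 1 + n := by omega
      rw [hfun, hnum]
      exact ⟨hfeas, hmin⟩

end SPAux
namespace SPAux

lemma loadc_comp {R : Type} [DecidableEq R] {n : ℕ} (A : Fin n → Finset R)
    (σ : Equiv.Perm (Fin n)) (r : R) : loadc (A ∘ σ) r = loadc A r := by
  unfold loadc
  rw [Finset.card_filter, Finset.card_filter]
  exact Fintype.sum_equiv σ _ _ (fun i => rfl)

end SPAux

/-- For every symmetric network congestion game on a series-parallel
graph, every 1-lookahead outcome is a global minimizer of Rosenthal's potential over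
all outcomes. -/
theorem sp_one_lookahead_minimizes_potential (t : SPTree) (d : t.Arc → ℕ → ℝ)
    (hmono : ∀ r, Monotone (d r)) (hnonneg : ∀ r m, 0 ≤ d r m)
    (n : ℕ) (A : Fin n → Finset t.Arc)
    (hA : CGame.IsKLO 1 (SNCGsp t d n) A)
    (B : Fin n → Finset t.Arc) (hB : CGame.IsOutcome (SNCGsp t d n) B) :
    CGame.potential (SNCGsp t d n) A ≤ CGame.potential (SNCGsp t d n) B := by
    classical
  obtain ⟨σ, hσ⟩ := hA
  have hσ' : CGame.IsKLA 1 (SPAux.shiftG t d n (fun _ => 0)) (A ∘ σ) := hσ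
  have h0f : SPAux.Feas t 0 (fun _ => (0 : ℕ)) := ⟨[], by simp, rfl, fun r => rfl⟩
  have h0m : ∀ y, SPAux.Feas t 0 y → SPAux.Phi d (fun _ => 0) ≤ SPAux.Phi d y := by
    rintro y ⟨L, -, hlen, hl⟩
    have hL : L = [] := List.length_eq_zero_iff.1 hlen
    subst hL
    have : y = fun _ => 0 := funext fun r => hl r
    rw [this]
  obtain ⟨-, hmin⟩ := SPAux.main_ind t d hmono n (fun _ => 0) 0 h0f h0m (A ∘ σ) hσ'
  have hBfeas : SPAux.Feas t (0 + n) (SPAux.loadc B) := by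
    refine ⟨List.ofFn B, ?_, by simp, fun r => (SPAux.lload_ofFn B r).symm⟩
    intro P hP
    rw [List.mem_ofFn] at hP
    obtain ⟨i, rfl⟩ := hP
    exact hB i
  have hle := hmin (SPAux.loadc B) hBfeas
  have heq : SPAux.Phi d (fun r => (fun _ => 0) r + SPAux.loadc (A ∘ σ) r)
      = SPAux.Phi d (SPAux.loadc A) := by
    congr 1
    funext r
    rw [SPAux.loadc_comp, Nat.zero_add]
  rw [heq] at hle
  exact hle
end

section
/- Let G be a symmetric network congestion game on a series-parallel graph. For every global minimizer A of the Rosenthal potential Φ over all outcomes, there exists a 1-lookahead outcome B of G with the same congestion vector, x(B) = x(A). Consequently, the set of congestion vectors of 1-lookahead outcomes equals the set of congestion vectors of global minimizers of Φ. -/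
/-!
A player with lookahead 1 sees only himself, so in a symmetric congestion game the 1-lookahead
outcomes are exactly the greedy sequences: each player in turn takes a path that is shortest for
the marginal delays `d r (x r + 1)` of the load `x` left by his predecessors.

On a series-parallel graph the load vectors of `n`-player outcomes are exactly the integral
`o`–`d` flows of value `n`, and these have an exchange property: if `x` is a flow of value at
most `k`, every flow of value `k + 1` splits as a flow `z` of value `k` plus a path `Q` along
which `z ≥ x`. For nondecreasing delays this gives, via
`Φ(z + Q) = Φ(z) + ∑_{r ∈ Q} d r (z r + 1)`, that adding a best-response path to a
potential-minimal flow of value `m` yields a potential-minimal flow of value `m + 1`, and that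
every potential-minimal flow of value `m + 1` arises in this way. Induction on the number of
players identifies the congestion vectors of greedy outcomes with those of potential minimizers.
-/

open Finset

theorem Finset.image_inl_union_image_inr {α β : Type*} [DecidableEq α] [DecidableEq β]
    (s : Finset α) (t : Finset β) : s.image Sum.inl ∪ t.image Sum.inr = s.disjSum t := by
  ext (a | b) <;> simp

theorem Finset.image_inl_eq_disjSum_empty {α β : Type*} [DecidableEq α] [DecidableEq β]
    (s : Finset α) : s.image (Sum.inl : α → α ⊕ β) = s.disjSum ∅ := by
  ext (a | b) <;> simp

theorem Finset.image_inr_eq_empty_disjSum {α β : Type*} [DecidableEq α] [DecidableEq β]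
    (t : Finset β) : t.image (Sum.inr : β → α ⊕ β) = (∅ : Finset α).disjSum t := by
  ext (a | b) <;> simp

section Loads

variable {α : Type*}

/-- Defined through `Set.indicator`, so that no `DecidableEq α` instance is involved: the arc types
of series-parallel graphs carry instances that unfold only at default transparency. -/
noncomputable def pathLoad (P : Finset α) : α → ℕ := (P : Set α).indicator 1

lemma pathLoad_of_mem {P : Finset α} {r : α} (h : r ∈ P) : pathLoad P r = 1 :=
  Set.indicator_of_mem (mem_coe.2 h) _

lemma pathLoad_of_notMem {P : Finset α} {r : α} (h : r ∉ P) : pathLoad P r = 0 :=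
  Set.indicator_of_notMem (mem_coe.not.2 h) _

@[simp]
lemma pathLoad_empty : pathLoad (∅ : Finset α) = 0 := by
  ext; simp [pathLoad]

@[simp]
lemma pathLoad_disjSum_inl {β : Type*} (s : Finset α) (t : Finset β) (a : α) :
    pathLoad (s.disjSum t) (Sum.inl a) = pathLoad s a := by
  by_cases h : a ∈ s <;> simp [pathLoad_of_mem, pathLoad_of_notMem, h]

@[simp]
lemma pathLoad_disjSum_inr {β : Type*} (s : Finset α) (t : Finset β) (b : β) :
    pathLoad (s.disjSum t) (Sum.inr b) = pathLoad t b := by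
  by_cases h : b ∈ t <;> simp [pathLoad_of_mem, pathLoad_of_notMem, h]

lemma add_pathLoad_disjSum_comp_inl {β : Type*} (x : α ⊕ β → ℕ) (s : Finset α) (t : Finset β) :
    (x + pathLoad (s.disjSum t)) ∘ Sum.inl = x ∘ Sum.inl + pathLoad s := by
  ext; simp

lemma add_pathLoad_disjSum_comp_inr {β : Type*} (x : α ⊕ β → ℕ) (s : Finset α) (t : Finset β) :
    (x + pathLoad (s.disjSum t)) ∘ Sum.inr = x ∘ Sum.inr + pathLoad t := by
  ext; simp

lemma eq_elim_add_pathLoad_disjSum {β : Type*} {y : α ⊕ β → ℕ} {z₁ : α → ℕ} {z₂ : β → ℕ}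
    {s : Finset α} {t : Finset β} (h₁ : y ∘ Sum.inl = z₁ + pathLoad s)
    (h₂ : y ∘ Sum.inr = z₂ + pathLoad t) : y = Sum.elim z₁ z₂ + pathLoad (s.disjSum t) := by
  ext (a | b)
  · simpa using congrFun h₁ a
  · simpa using congrFun h₂ b

noncomputable def profileLoad {n : ℕ} (A : Fin n → Finset α) : α → ℕ := ∑ i, pathLoad (A i)

lemma profileLoad_succ {n : ℕ} (A : Fin (n + 1) → Finset α) :
    profileLoad A = pathLoad (A 0) + profileLoad (Fin.tail A) :=
  Fin.sum_univ_succ _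

@[simp]
lemma profileLoad_cons {n : ℕ} (P : Finset α) (A : Fin n → Finset α) :
    profileLoad (Fin.cons P A) = pathLoad P + profileLoad A :=
  Fin.sum_univ_succ _

@[simp]
lemma profileLoad_snoc {n : ℕ} (A : Fin n → Finset α) (P : Finset α) :
    profileLoad (Fin.snoc A P) = profileLoad A + pathLoad P := by
  simp [profileLoad, Fin.sum_univ_castSucc]

lemma profileLoad_comp_perm {n : ℕ} (A : Fin n → Finset α) (σ : Equiv.Perm (Fin n)) :
    profileLoad (A ∘ σ) = profileLoad A :=
  Equiv.sum_comp σ (fun i => pathLoad (A i))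

def rosenthal [Fintype α] (d : α → ℕ → ℝ) (x : α → ℕ) : ℝ :=
  ∑ r, ∑ i ∈ Icc 1 (x r), d r i

lemma rosenthal_add_pathLoad [Fintype α] (d : α → ℕ → ℝ) (x : α → ℕ) (P : Finset α) :
    rosenthal d (x + pathLoad P) = rosenthal d x + ∑ r ∈ P, d r (x r + 1) := by
  have hr : ∀ r, ∑ i ∈ Icc 1 (x r + pathLoad P r), d r i
      = ∑ i ∈ Icc 1 (x r), d r i + (P : Set α).indicator (fun r => d r (x r + 1)) r := by
    intro r
    by_cases h : r ∈ P
    · rw [pathLoad_of_mem h, Set.indicator_of_mem (mem_coe.2 h), sum_Icc_succ_top (by omega)]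
    · rw [pathLoad_of_notMem h, Set.indicator_of_notMem (mem_coe.not.2 h), add_zero, add_zero]
  simp only [rosenthal, Pi.add_apply, hr, sum_add_distrib, sum_indicator_subset _ (subset_univ P)]

end Loads

namespace CGame

variable {R : Type} [DecidableEq R] [Fintype R] {n : ℕ}

lemma congestion_eq_profileLoad (G : CGame R n) (A : Fin n → Finset R) :
    G.congestion A = profileLoad A := by
  ext r
  simp only [congestion, card_filter, profileLoad, Finset.sum_apply, pathLoad, Set.indicator_apply,
    mem_coe, Pi.one_apply]

lemma potential_eq_rosenthal (G : CGame R n) (A : Fin n → Finset R) :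
    G.potential A = rosenthal G.delay (profileLoad A) := by
  rw [potential, rosenthal, congestion_eq_profileLoad]

lemma isSPO_one_iff (G : CGame R 1) (B : Fin 1 → Finset R) :
    G.IsSPO B ↔ B 0 ∈ G.actions 0 ∧
      ∀ a ∈ G.actions 0, ∑ r ∈ B 0, G.delay r 1 ≤ ∑ r ∈ a, G.delay r 1 := by
  have hcost : ∀ (a : Finset R) (f : Fin 0 → Finset R),
      G.cost (Fin.cons a f) 0 = ∑ r ∈ a, G.delay r 1 := by
    intro a f
    refine sum_congr rfl fun r hr => ?_
    rw [congestion, card_filter, Fin.sum_univ_one, Fin.cons_zero, if_pos hr]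
  constructor
  · rintro ⟨hB, f, -, -, hmin⟩
    exact ⟨hB, fun a ha => by simpa only [hcost] using hmin a ha⟩
  · rintro ⟨hB, hmin⟩
    refine ⟨hB, fun _ => Fin.elim0, fun _ _ => trivial, funext fun i => i.elim0, fun a ha => ?_⟩
    simpa only [hcost] using hmin a ha

lemma isKLA_one_succ_iff (G : CGame R (n + 1)) (A : Fin (n + 1) → Finset R) :
    IsKLA 1 G A ↔ (A 0 ∈ G.actions 0 ∧
      ∀ a ∈ G.actions 0, ∑ r ∈ A 0, G.delay r 1 ≤ ∑ r ∈ a, G.delay r 1) ∧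
      IsKLA 1 (G.subgame (A 0)) (Fin.tail A) := by
  -- `min 1 (n + 1)` reduces to `1`, so `G.truncate 1 : CGame R 1`
  refine and_congr_left' ⟨fun ⟨_, B, hB, hB0⟩ => ?_, fun h => ⟨Nat.one_pos, fun _ => A 0, ?_, rfl⟩⟩
  · rw [← hB0]
    exact (isSPO_one_iff (G.truncate 1) B).1 hB
  · exact (isSPO_one_iff (G.truncate 1) _).2 h

end CGame

section Greedy

variable {α : Type*} (𝒜 : Finset (Finset α)) (d : α → ℕ → ℝ)

def IsBestResponse (ℓ : α → ℕ) (P : Finset α) : Prop :=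
  P ∈ 𝒜 ∧ ∀ a ∈ 𝒜, ∑ r ∈ P, d r (ℓ r + 1) ≤ ∑ r ∈ a, d r (ℓ r + 1)

def IsGreedy : (α → ℕ) → {n : ℕ} → (Fin n → Finset α) → Prop
  | _, 0, _ => True
  | ℓ, _ + 1, A => IsBestResponse 𝒜 d ℓ (A 0) ∧ IsGreedy (ℓ + pathLoad (A 0)) (Fin.tail A)

variable {𝒜 d}

lemma isGreedy_cons {n : ℕ} (ℓ : α → ℕ) (P : Finset α) (A : Fin n → Finset α) :
    IsGreedy 𝒜 d ℓ (Fin.cons P A : Fin (n + 1) → Finset α) ↔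
      IsBestResponse 𝒜 d ℓ P ∧ IsGreedy 𝒜 d (ℓ + pathLoad P) A :=
  Iff.rfl

lemma isGreedy_snoc {n : ℕ} (ℓ : α → ℕ) (B : Fin n → Finset α) (Q : Finset α) :
    IsGreedy 𝒜 d ℓ (Fin.snoc B Q : Fin (n + 1) → Finset α) ↔
      IsGreedy 𝒜 d ℓ B ∧ IsBestResponse 𝒜 d (ℓ + profileLoad B) Q := by
  induction n generalizing ℓ with
  | zero => simp [IsGreedy, Fin.snoc_zero, profileLoad]
  | succ n ih =>
    cases B using Fin.consCases with
    | cons P B =>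
      rw [← Fin.cons_snoc_eq_snoc_cons, isGreedy_cons, isGreedy_cons, ih, profileLoad_cons,
        add_assoc, and_assoc]

end Greedy

def symmGame {α : Type} [DecidableEq α] [Fintype α] (𝒜 : Finset (Finset α)) (d : α → ℕ → ℝ)
    (ℓ : α → ℕ) (n : ℕ) : CGame α n where
  actions _ := 𝒜
  delay r y := d r (y + ℓ r)

section SymmGame

variable {α : Type} [DecidableEq α] [Fintype α] (𝒜 : Finset (Finset α)) (d : α → ℕ → ℝ)

lemma symmGame_subgame (ℓ : α → ℕ) (n : ℕ) (a : Finset α) :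
    (symmGame 𝒜 d ℓ (n + 1)).subgame a = symmGame 𝒜 d (ℓ + pathLoad a) n := by
  simp only [CGame.subgame, symmGame, CGame.mk.injEq, true_and]
  ext r y
  by_cases h : r ∈ a
  · simp only [if_pos h, Pi.add_apply, pathLoad_of_mem h]; ring_nf
  · simp only [if_neg h, Pi.add_apply, pathLoad_of_notMem h]; ring_nf

lemma isKLA_one_symmGame_iff {n : ℕ} (ℓ : α → ℕ) (A : Fin n → Finset α) :
    CGame.IsKLA 1 (symmGame 𝒜 d ℓ n) A ↔ IsGreedy 𝒜 d ℓ A := by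
  induction n generalizing ℓ with
  | zero => exact Iff.rfl
  | succ n ih =>
    rw [CGame.isKLA_one_succ_iff, symmGame_subgame, ih]
    simp only [IsGreedy, IsBestResponse, symmGame, add_comm 1]

end SymmGame

namespace SPTree

lemma mem_paths_series {t₁ t₂ : SPTree} {P : Finset (series t₁ t₂).Arc} :
    P ∈ (series t₁ t₂).paths ↔ ∃ P₁ ∈ t₁.paths, ∃ P₂ ∈ t₂.paths, P₁.disjSum P₂ = P := by
  simp only [paths, mem_image, mem_product, Prod.exists]
  constructor
  · rintro ⟨P₁, P₂, ⟨h₁, h₂⟩, rfl⟩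
    exact ⟨P₁, h₁, P₂, h₂, (image_inl_union_image_inr P₁ P₂).symm⟩
  · rintro ⟨P₁, h₁, P₂, h₂, rfl⟩
    exact ⟨P₁, P₂, ⟨h₁, h₂⟩, image_inl_union_image_inr P₁ P₂⟩

lemma mem_paths_parallel {t₁ t₂ : SPTree} {P : Finset (parallel t₁ t₂).Arc} :
    P ∈ (parallel t₁ t₂).paths ↔ (∃ P₁ ∈ t₁.paths, P₁.disjSum ∅ = P) ∨
      ∃ P₂ ∈ t₂.paths, (∅ : Finset t₁.Arc).disjSum P₂ = P := by
  simp only [paths, mem_union, mem_image]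
  constructor
  · rintro (⟨P₁, h₁, rfl⟩ | ⟨P₂, h₂, rfl⟩)
    · exact .inl ⟨P₁, h₁, (image_inl_eq_disjSum_empty P₁).symm⟩
    · exact .inr ⟨P₂, h₂, (image_inr_eq_empty_disjSum P₂).symm⟩
  · rintro (⟨P₁, h₁, rfl⟩ | ⟨P₂, h₂, rfl⟩)
    · exact .inl ⟨P₁, h₁, image_inl_eq_disjSum_empty P₁⟩
    · exact .inr ⟨P₂, h₂, image_inr_eq_empty_disjSum P₂⟩

lemma paths_nonempty : (t : SPTree) → t.paths.Nonempty
  | edge => singleton_nonempty _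
  | series t₁ t₂ =>
    have ⟨P₁, h₁⟩ := paths_nonempty t₁
    have ⟨P₂, h₂⟩ := paths_nonempty t₂
    ⟨_, mem_paths_series.2 ⟨P₁, h₁, P₂, h₂, rfl⟩⟩
  | parallel t₁ _ =>
    have ⟨P₁, h₁⟩ := paths_nonempty t₁
    ⟨_, mem_paths_parallel.2 (.inl ⟨P₁, h₁, rfl⟩)⟩

/-- Integral `o`–`d` flows of value `m`, following the series-parallel decomposition. -/
def IsFlow : (t : SPTree) → ℕ → (t.Arc → ℕ) → Prop
  | edge, m, x => ∀ r, x r = m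
  | series t₁ t₂, m, x => IsFlow t₁ m (x ∘ Sum.inl) ∧ IsFlow t₂ m (x ∘ Sum.inr)
  | parallel t₁ t₂, m, x =>
    ∃ m₁ m₂, m₁ + m₂ = m ∧ IsFlow t₁ m₁ (x ∘ Sum.inl) ∧ IsFlow t₂ m₂ (x ∘ Sum.inr)

lemma isFlow_zero : (t : SPTree) → IsFlow t 0 0
  | edge => fun _ => rfl
  | series t₁ t₂ => ⟨isFlow_zero t₁, isFlow_zero t₂⟩
  | parallel t₁ t₂ => ⟨0, 0, rfl, isFlow_zero t₁, isFlow_zero t₂⟩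

lemma IsFlow.eq_zero : {t : SPTree} → {x : t.Arc → ℕ} → IsFlow t 0 x → x = 0
  | edge, _, h => funext h
  | series _ _, _, ⟨h₁, h₂⟩ => by
    ext (a | b)
    · exact congrFun h₁.eq_zero a
    · exact congrFun h₂.eq_zero b
  | parallel _ _, _, ⟨m₁, m₂, hm, h₁, h₂⟩ => by
    obtain ⟨rfl, rfl⟩ : m₁ = 0 ∧ m₂ = 0 := by omega
    ext (a | b)
    · exact congrFun h₁.eq_zero a
    · exact congrFun h₂.eq_zero b

lemma IsFlow.add_pathLoad : {t : SPTree} → {m : ℕ} → {x : t.Arc → ℕ} → {P : Finset t.Arc} →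
    IsFlow t m x → P ∈ t.paths → IsFlow t (m + 1) (x + pathLoad P)
  | edge, m, x, P, hx, hP => fun r => by
    rw [Pi.add_apply, hx r, pathLoad_of_mem (by rw [mem_singleton.1 hP]; exact mem_univ r)]
  | series _ _, m, x, P, ⟨hx₁, hx₂⟩, hP => by
    obtain ⟨P₁, hP₁, P₂, hP₂, rfl⟩ := mem_paths_series.1 hP
    exact ⟨add_pathLoad_disjSum_comp_inl x P₁ P₂ ▸ hx₁.add_pathLoad hP₁,
      add_pathLoad_disjSum_comp_inr x P₁ P₂ ▸ hx₂.add_pathLoad hP₂⟩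
  | parallel _ _, m, x, P, ⟨m₁, m₂, hm, hx₁, hx₂⟩, hP => by
    rcases mem_paths_parallel.1 hP with ⟨P₁, hP₁, rfl⟩ | ⟨P₂, hP₂, rfl⟩
    · refine ⟨m₁ + 1, m₂, by omega, ?_, ?_⟩
      · exact add_pathLoad_disjSum_comp_inl x P₁ ∅ ▸ hx₁.add_pathLoad hP₁
      · exact add_pathLoad_disjSum_comp_inr x P₁ ∅ ▸ by rw [pathLoad_empty, add_zero]; exact hx₂
    · refine ⟨m₁, m₂ + 1, by omega, ?_, ?_⟩
      · exact add_pathLoad_disjSum_comp_inl x ∅ P₂ ▸ by rw [pathLoad_empty, add_zero]; exact hx₁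
      · exact add_pathLoad_disjSum_comp_inr x ∅ P₂ ▸ hx₂.add_pathLoad hP₂

/-- This exchange property is where series-parallelness is used: in a general network `y` need
not exceed `x` along any whole `o`–`d` path. -/
lemma IsFlow.exists_eq_add_pathLoad : {t : SPTree} → {m k : ℕ} → {x y : t.Arc → ℕ} →
    IsFlow t m x → IsFlow t (k + 1) y → m ≤ k →
    ∃ Q ∈ t.paths, ∃ z, IsFlow t k z ∧ (∀ r ∈ Q, x r ≤ z r) ∧ y = z + pathLoad Q
  | edge, m, k, x, y, hx, hy, hmk =>
    ⟨univ, mem_singleton_self _, fun _ => k, fun _ => rfl, fun r _ => hx r ▸ hmk,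
      funext fun r => by rw [Pi.add_apply, hy r, pathLoad_of_mem (mem_univ r)]⟩
  | series _ _, m, k, x, y, ⟨hx₁, hx₂⟩, ⟨hy₁, hy₂⟩, hmk => by
    obtain ⟨Q₁, hQ₁, z₁, hz₁, hxz₁, hyz₁⟩ := hx₁.exists_eq_add_pathLoad hy₁ hmk
    obtain ⟨Q₂, hQ₂, z₂, hz₂, hxz₂, hyz₂⟩ := hx₂.exists_eq_add_pathLoad hy₂ hmk
    refine ⟨Q₁.disjSum Q₂, mem_paths_series.2 ⟨Q₁, hQ₁, Q₂, hQ₂, rfl⟩, Sum.elim z₁ z₂, ⟨hz₁, hz₂⟩,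
      ?_, eq_elim_add_pathLoad_disjSum hyz₁ hyz₂⟩
    rintro (a | b) h
    · exact hxz₁ a (inl_mem_disjSum.1 h)
    · exact hxz₂ b (inr_mem_disjSum.1 h)
  | parallel _ _, m, k, x, y, ⟨m₁, m₂, hm, hx₁, hx₂⟩, ⟨k₁, k₂, hk, hy₁, hy₂⟩, hmk => by
    rcases (by omega : m₁ < k₁ ∨ m₂ < k₂) with h | h
    · obtain ⟨k₁, rfl⟩ : ∃ j, k₁ = j + 1 := ⟨k₁ - 1, by omega⟩
      obtain ⟨Q₁, hQ₁, z₁, hz₁, hxz₁, hyz₁⟩ := hx₁.exists_eq_add_pathLoad hy₁ (by omega)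
      refine ⟨Q₁.disjSum ∅, mem_paths_parallel.2 (.inl ⟨Q₁, hQ₁, rfl⟩), Sum.elim z₁ (y ∘ Sum.inr),
        ⟨k₁, k₂, by omega, hz₁, hy₂⟩, ?_,
        eq_elim_add_pathLoad_disjSum hyz₁ (by rw [pathLoad_empty, add_zero]; rfl)⟩
      rintro (a | b) h
      · exact hxz₁ a (inl_mem_disjSum.1 h)
      · exact absurd (inr_mem_disjSum.1 h) (notMem_empty b)
    · obtain ⟨k₂, rfl⟩ : ∃ j, k₂ = j + 1 := ⟨k₂ - 1, by omega⟩
      obtain ⟨Q₂, hQ₂, z₂, hz₂, hxz₂, hyz₂⟩ := hx₂.exists_eq_add_pathLoad hy₂ (by omega)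
      refine ⟨(∅ : Finset _).disjSum Q₂, mem_paths_parallel.2 (.inr ⟨Q₂, hQ₂, rfl⟩),
        Sum.elim (y ∘ Sum.inl) z₂, ⟨k₁, k₂, by omega, hy₁, hz₂⟩, ?_,
        eq_elim_add_pathLoad_disjSum (by rw [pathLoad_empty, add_zero]; rfl) hyz₂⟩
      rintro (a | b) h
      · exact absurd (inl_mem_disjSum.1 h) (notMem_empty a)
      · exact hxz₂ b (inr_mem_disjSum.1 h)

lemma isFlow_profileLoad {t : SPTree} {n : ℕ} {A : Fin n → Finset t.Arc}
    (hA : ∀ i, A i ∈ t.paths) : IsFlow t n (profileLoad A) := by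
  induction n with
  | zero => exact isFlow_zero t
  | succ n ih =>
    rw [profileLoad_succ, add_comm (pathLoad _)]
    exact (ih fun i => hA i.succ).add_pathLoad (hA 0)

lemma IsFlow.exists_profile {t : SPTree} {n : ℕ} {x : t.Arc → ℕ} (hx : IsFlow t n x) :
    ∃ A : Fin n → Finset t.Arc, (∀ i, A i ∈ t.paths) ∧ profileLoad A = x := by
  induction n generalizing x with
  | zero => exact ⟨Fin.elim0, fun i => i.elim0, hx.eq_zero.symm⟩
  | succ n ih =>
    obtain ⟨Q, hQ, z, hz, -, rfl⟩ := (isFlow_zero t).exists_eq_add_pathLoad hx n.zero_le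
    obtain ⟨A, hA, rfl⟩ := ih hz
    exact ⟨Fin.cons Q A, fun i => Fin.cases hQ hA i, by rw [profileLoad_cons, add_comm]⟩

variable {t : SPTree} (d : t.Arc → ℕ → ℝ)

def IsMinFlow (m : ℕ) (x : t.Arc → ℕ) : Prop :=
  IsFlow t m x ∧ ∀ y, IsFlow t m y → rosenthal d x ≤ rosenthal d y

lemma isMinFlow_zero : IsMinFlow d 0 (0 : t.Arc → ℕ) :=
  ⟨isFlow_zero t, fun _ hy => by rw [hy.eq_zero]⟩

lemma exists_isMinFlow (m : ℕ) : ∃ x, IsMinFlow d m x := by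
  obtain ⟨P, hP⟩ := t.paths_nonempty
  obtain ⟨A, hA, hmin⟩ := (Fintype.piFinset fun _ : Fin m => t.paths).exists_min_image
    (fun A => rosenthal d (profileLoad A)) ⟨fun _ => P, Fintype.mem_piFinset.2 fun _ => hP⟩
  refine ⟨profileLoad A, isFlow_profileLoad (Fintype.mem_piFinset.1 hA), fun y hy => ?_⟩
  obtain ⟨B, hB, rfl⟩ := hy.exists_profile
  exact hmin B (Fintype.mem_piFinset.2 hB)

lemma isMinFlow_profileLoad_iff {n : ℕ} {A : Fin n → Finset t.Arc} (hA : ∀ i, A i ∈ t.paths) :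
    IsMinFlow d n (profileLoad A) ↔ ∀ B : Fin n → Finset t.Arc, (∀ i, B i ∈ t.paths) →
      rosenthal d (profileLoad A) ≤ rosenthal d (profileLoad B) := by
  refine ⟨fun h B hB => h.2 _ (isFlow_profileLoad hB), fun h => ⟨isFlow_profileLoad hA, ?_⟩⟩
  intro y hy
  obtain ⟨B, hB, rfl⟩ := hy.exists_profile
  exact h B hB

variable {d}

lemma IsMinFlow.add_pathLoad (hmono : ∀ r, Monotone (d r)) {m : ℕ} {x : t.Arc → ℕ}
    {P : Finset t.Arc} (hx : IsMinFlow d m x) (hP : IsBestResponse t.paths d x P) :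
    IsMinFlow d (m + 1) (x + pathLoad P) := by
  refine ⟨hx.1.add_pathLoad hP.1, fun y hy => ?_⟩
  obtain ⟨Q, hQ, z, hz, hxz, rfl⟩ := hx.1.exists_eq_add_pathLoad hy le_rfl
  rw [rosenthal_add_pathLoad, rosenthal_add_pathLoad]
  calc rosenthal d x + ∑ r ∈ P, d r (x r + 1)
      ≤ rosenthal d x + ∑ r ∈ Q, d r (x r + 1) := add_le_add_right (hP.2 Q hQ) _
    _ ≤ rosenthal d z + ∑ r ∈ Q, d r (z r + 1) :=
      add_le_add (hx.2 z hz) (sum_le_sum fun r hr => hmono r (by simpa using hxz r hr))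

lemma IsMinFlow.exists_eq_add_pathLoad (hmono : ∀ r, Monotone (d r)) {m : ℕ}
    {y : t.Arc → ℕ} (hy : IsMinFlow d (m + 1) y) :
    ∃ x P, IsMinFlow d m x ∧ IsBestResponse t.paths d x P ∧ y = x + pathLoad P := by
  obtain ⟨x₀, hx₀⟩ := exists_isMinFlow d m
  obtain ⟨Q, hQ, z, hz, hxz, rfl⟩ := hx₀.1.exists_eq_add_pathLoad hy.1 le_rfl
  have hcmp : ∀ w P, IsFlow t m w → P ∈ t.paths →
      rosenthal d z + ∑ r ∈ Q, d r (z r + 1) ≤ rosenthal d w + ∑ r ∈ P, d r (w r + 1) := by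
    intro w P hw hP
    simpa only [rosenthal_add_pathLoad] using hy.2 _ (hw.add_pathLoad hP)
  have hzx₀ : rosenthal d z ≤ rosenthal d x₀ := by
    have hQx₀ : ∑ r ∈ Q, d r (x₀ r + 1) ≤ ∑ r ∈ Q, d r (z r + 1) :=
      sum_le_sum fun r hr => hmono r (by simpa using hxz r hr)
    linarith [hcmp x₀ Q hx₀.1 hQ]
  refine ⟨z, Q, ⟨hz, fun w hw => hzx₀.trans (hx₀.2 w hw)⟩, ⟨hQ, fun P hP => ?_⟩, rfl⟩
  linarith [hcmp z P hz hP]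

lemma IsMinFlow.add_profileLoad (hmono : ∀ r, Monotone (d r)) {m n : ℕ} {ℓ : t.Arc → ℕ}
    {A : Fin n → Finset t.Arc} (hℓ : IsMinFlow d m ℓ) (hA : IsGreedy t.paths d ℓ A) :
    IsMinFlow d (m + n) (ℓ + profileLoad A) := by
  induction n generalizing ℓ m with
  | zero => simpa [profileLoad] using hℓ
  | succ n ih =>
    rw [profileLoad_succ, ← add_assoc, ← add_assoc, add_right_comm]
    exact ih (hℓ.add_pathLoad hmono hA.1) hA.2

lemma isMinFlow_profileLoad_of_isGreedy (hmono : ∀ r, Monotone (d r)) {n : ℕ}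
    {A : Fin n → Finset t.Arc} (hA : IsGreedy t.paths d 0 A) : IsMinFlow d n (profileLoad A) := by
  simpa using (isMinFlow_zero d).add_profileLoad hmono hA

lemma IsMinFlow.exists_isGreedy (hmono : ∀ r, Monotone (d r)) {n : ℕ} {x : t.Arc → ℕ}
    (hx : IsMinFlow d n x) :
    ∃ A : Fin n → Finset t.Arc, IsGreedy t.paths d 0 A ∧ profileLoad A = x := by
  induction n generalizing x with
  | zero => exact ⟨Fin.elim0, trivial, hx.1.eq_zero.symm⟩
  | succ n ih =>
    obtain ⟨y, P, hy, hP, rfl⟩ := hx.exists_eq_add_pathLoad hmono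
    obtain ⟨A, hA, rfl⟩ := ih hy
    exact ⟨Fin.snoc A P, (isGreedy_snoc 0 A P).2 ⟨hA, by rwa [zero_add]⟩, profileLoad_snoc A P⟩

end SPTree

open SPTree

lemma isKLO_one_SNCGsp_iff {t : SPTree} {d : t.Arc → ℕ → ℝ} {n : ℕ} {B : Fin n → Finset t.Arc} :
    CGame.IsKLO 1 (SNCGsp t d n) B ↔ ∃ σ : Equiv.Perm (Fin n), IsGreedy t.paths d 0 (B ∘ σ) :=
  exists_congr fun σ => isKLA_one_symmGame_iff t.paths d 0 (B ∘ σ)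

lemma isPotentialMinimizer_SNCGsp_iff {t : SPTree} {d : t.Arc → ℕ → ℝ} {n : ℕ}
    {A : Fin n → Finset t.Arc} (hA : CGame.IsOutcome (SNCGsp t d n) A) :
    (∀ B, CGame.IsOutcome (SNCGsp t d n) B →
      CGame.potential (SNCGsp t d n) A ≤ CGame.potential (SNCGsp t d n) B) ↔
      IsMinFlow d n (profileLoad A) := by
  simp only [CGame.potential_eq_rosenthal]
  exact (isMinFlow_profileLoad_iff d hA).symm

theorem sp_potential_minimizers_congestion_general (t : SPTree) (d : t.Arc → ℕ → ℝ)
    (hmono : ∀ r, Monotone (d r)) (n : ℕ) :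
    (∀ A : Fin n → Finset t.Arc, CGame.IsOutcome (SNCGsp t d n) A →
      (∀ B, CGame.IsOutcome (SNCGsp t d n) B →
        CGame.potential (SNCGsp t d n) A ≤ CGame.potential (SNCGsp t d n) B) →
      ∃ B, CGame.IsKLO 1 (SNCGsp t d n) B ∧
        CGame.congestion (SNCGsp t d n) B = CGame.congestion (SNCGsp t d n) A) ∧
    {x : t.Arc → ℕ | ∃ B, CGame.IsKLO 1 (SNCGsp t d n) B ∧
        x = CGame.congestion (SNCGsp t d n) B} =
      {x : t.Arc → ℕ | ∃ A, CGame.IsOutcome (SNCGsp t d n) A ∧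
        (∀ B, CGame.IsOutcome (SNCGsp t d n) B →
          CGame.potential (SNCGsp t d n) A ≤ CGame.potential (SNCGsp t d n) B) ∧
        x = CGame.congestion (SNCGsp t d n) A} := by
  simp only [CGame.congestion_eq_profileLoad]
  have hminimizer : ∀ A, CGame.IsOutcome (SNCGsp t d n) A →
      (∀ B, CGame.IsOutcome (SNCGsp t d n) B →
        CGame.potential (SNCGsp t d n) A ≤ CGame.potential (SNCGsp t d n) B) →
      ∃ B, CGame.IsKLO 1 (SNCGsp t d n) B ∧ profileLoad B = profileLoad A := by
    intro A hA hmin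
    obtain ⟨B, hB, hBA⟩ := ((isPotentialMinimizer_SNCGsp_iff hA).1 hmin).exists_isGreedy hmono
    exact ⟨B, isKLO_one_SNCGsp_iff.2 ⟨1, hB⟩, hBA⟩
  refine ⟨hminimizer, Set.ext fun x => ⟨?_, ?_⟩⟩
  · rintro ⟨B, hB, rfl⟩
    obtain ⟨σ, hσ⟩ := isKLO_one_SNCGsp_iff.1 hB
    have hmin := isMinFlow_profileLoad_of_isGreedy hmono hσ
    rw [profileLoad_comp_perm] at hmin
    obtain ⟨A, hA, hAB⟩ := hmin.1.exists_profile
    exact ⟨A, hA, (isPotentialMinimizer_SNCGsp_iff hA).2 (hAB ▸ hmin), hAB.symm⟩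
  · rintro ⟨A, hA, hmin, rfl⟩
    obtain ⟨B, hB, hBA⟩ := hminimizer A hA hmin
    exact ⟨B, hB, hBA.symm⟩

/-- In an SNCG on a series-parallel graph, every global minimizer of
Rosenthal's potential has the same congestion vector as some 1-lookahead outcome;
consequently the congestion vectors of 1-lookahead outcomes are exactly the congestion
vectors of global minimizers of the potential. -/
theorem sp_potential_minimizers_congestion (t : SPTree) (d : t.Arc → ℕ → ℝ)
    (hmono : ∀ r, Monotone (d r)) (hnonneg : ∀ r m, 0 ≤ d r m) (n : ℕ) :
    (∀ A : Fin n → Finset t.Arc, CGame.IsOutcome (SNCGsp t d n) A →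
      (∀ B, CGame.IsOutcome (SNCGsp t d n) B →
        CGame.potential (SNCGsp t d n) A ≤ CGame.potential (SNCGsp t d n) B) →
      ∃ B, CGame.IsKLO 1 (SNCGsp t d n) B ∧
        CGame.congestion (SNCGsp t d n) B = CGame.congestion (SNCGsp t d n) A) ∧
    {x : t.Arc → ℕ | ∃ B, CGame.IsKLO 1 (SNCGsp t d n) B ∧
        x = CGame.congestion (SNCGsp t d n) B} =
      {x : t.Arc → ℕ | ∃ A, CGame.IsOutcome (SNCGsp t d n) A ∧
        (∀ B, CGame.IsOutcome (SNCGsp t d n) B →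
          CGame.potential (SNCGsp t d n) A ≤ CGame.potential (SNCGsp t d n) B) ∧
        x = CGame.congestion (SNCGsp t d n) A} :=
  sp_potential_minimizers_congestion_general t d hmono n
end
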